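/- arXiv:math/0412293 — 15 statements merged into one kernel-verified Lean document; each statement's English description precedes it below -/
import Mathlib

section
/- Let K be a field and let α, β, γ ∈ K. Let A : ℤ → K satisfy A h ≠ 0 for all h, and set e h = A(h−1)·A(h+1)/A(h)². Assume that for all h ∈ ℤ: e(h−1)·e(h)²·e(h+1) = α²·e(h) − β and (e(h−1) + e(h+1))·e(h)² = γ·e(h) − α². Let W : ℤ → K satisfy W(−m) = −W(m) for all m ∈ ℤ, W(0) = 0, W(m) ≠ 0 for all m ≥ 1, W(1) = 1, W(2) = α, W(3) = β, W(4) = αβγ − α⁵, and W(m−2)·W(m+2) = α²·W(m−1)·W(m+1) − β·W(m)² for all m ≥ 3. Then for all h ∈ ℤ and all m ∈ ℤ: W(1)²·A(h−m)·A(h+m) = W(m)²·A(h−1)·A(h+1) − W(m−1)·W(m+1)·A(h)². -/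
/-!
Clearing denominators, the two conditions on `e` say that `A` satisfies the Somos 4 recurrence
together with a cubic companion relation with the same coefficients. The Ward sequence `W`
satisfies both relations as well; the cubic one follows from the conserved quantity of Somos 4.
The identity for gap `m + 1` comes from those for gaps `m` and `m - 1` through
`A(h-m-1) A(h+m+1) · A(h-m+1) A(h+m-1) = [A((h-1)-m) A((h-1)+m)] · [A((h+1)-m) A((h+1)+m)]`:
expand the right side by the gap `m` identity, reduce it with the four relations, and cancel the
nonzero factor given by the gap `m - 1` identity.
-/

section Relations

variable {R : Type*} [CommRing R]

def Somos4At (α β : R) (s : ℤ → R) (n : ℤ) : Prop :=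
  s (n - 2) * s (n + 2) = α ^ 2 * s (n - 1) * s (n + 1) - β * s n ^ 2

def CubicAt (α γ : R) (s : ℤ → R) (n : ℤ) : Prop :=
  s (n - 2) * s (n + 1) ^ 2 + s (n - 1) ^ 2 * s (n + 2) =
    γ * (s (n - 1) * s n * s (n + 1)) - α ^ 2 * s n ^ 3

/-- The conserved quantity of Somos 4 equals `γ`, with the denominator
`s (n - 1) * s n * s (n + 1) * s (n + 2)` cleared. -/
def Somos4InvariantAt (α β γ : R) (s : ℤ → R) (n : ℤ) : Prop :=
  s (n - 1) ^ 2 * s (n + 2) ^ 2 + α ^ 2 * (s (n - 1) * s (n + 1) ^ 3 + s n ^ 3 * s (n + 2)) =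
    β * (s n ^ 2 * s (n + 1) ^ 2) + γ * (s (n - 1) * s n * s (n + 1) * s (n + 2))

def GapIdentity (A W : ℤ → R) (m : ℤ) : Prop :=
  ∀ h, A (h - m) * A (h + m) = W m ^ 2 * (A (h - 1) * A (h + 1)) - W (m - 1) * W (m + 1) * A h ^ 2

end Relations

section EllipticRatio

variable {K : Type*} [Field K] {α β γ : K} {A e : ℤ → K}

theorem ellipticRatio_prod (hA : ∀ h, A h ≠ 0) (he : ∀ h, e h = A (h - 1) * A (h + 1) / A h ^ 2)
    (h : ℤ) : e (h - 1) * e h ^ 2 * e (h + 1) = A (h - 2) * A (h + 2) / A h ^ 2 := by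
  rw [he, he, he, show h - 1 - 1 = h - 2 by ring, show h - 1 + 1 = h by ring,
    show h + 1 - 1 = h by ring, show h + 1 + 1 = h + 2 by ring]
  field_simp [hA (h - 1), hA h, hA (h + 1)]

theorem ellipticRatio_add_mul (hA : ∀ h, A h ≠ 0)
    (he : ∀ h, e h = A (h - 1) * A (h + 1) / A h ^ 2) (h : ℤ) :
    (e (h - 1) + e (h + 1)) * e h ^ 2 =
      (A (h - 2) * A (h + 1) ^ 2 + A (h - 1) ^ 2 * A (h + 2)) / A h ^ 3 := by
  rw [he, he, he, show h - 1 - 1 = h - 2 by ring, show h - 1 + 1 = h by ring,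
    show h + 1 - 1 = h by ring, show h + 1 + 1 = h + 2 by ring]
  field_simp [hA (h - 1), hA h, hA (h + 1)]

theorem somos4At_of_ellipticRatio (hA : ∀ h, A h ≠ 0)
    (he : ∀ h, e h = A (h - 1) * A (h + 1) / A h ^ 2) {h : ℤ}
    (he1 : e (h - 1) * e h ^ 2 * e (h + 1) = α ^ 2 * e h - β) : Somos4At α β A h := by
  rw [ellipticRatio_prod hA he, he, div_eq_iff (pow_ne_zero 2 (hA h))] at he1
  rw [Somos4At, he1]
  field_simp [hA h]

theorem cubicAt_of_ellipticRatio (hA : ∀ h, A h ≠ 0)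
    (he : ∀ h, e h = A (h - 1) * A (h + 1) / A h ^ 2) {h : ℤ}
    (he2 : (e (h - 1) + e (h + 1)) * e h ^ 2 = γ * e h - α ^ 2) : CubicAt α γ A h := by
  rw [ellipticRatio_add_mul hA he, he, div_eq_iff (pow_ne_zero 3 (hA h))] at he2
  rw [CubicAt, he2]
  field_simp [hA h]

end EllipticRatio

section Somos4

variable {R : Type*} [CommRing R] [IsDomain R] {α β γ : R} {s : ℤ → R} {n : ℤ}

theorem Somos4InvariantAt.succ (hs : s (n - 1) ≠ 0) (hS : Somos4At α β s (n + 1))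
    (hI : Somos4InvariantAt α β γ s n) : Somos4InvariantAt α β γ s (n + 1) := by
  rw [Somos4At, show n + 1 - 2 = n - 1 by ring, show n + 1 - 1 = n by ring,
    show n + 1 + 2 = n + 3 by ring, show n + 1 + 1 = n + 2 by ring] at hS
  rw [Somos4InvariantAt] at hI ⊢
  rw [show n + 1 - 1 = n by ring, show n + 1 + 2 = n + 3 by ring,
    show n + 1 + 1 = n + 2 by ring]
  apply mul_left_cancel₀ (pow_ne_zero 2 hs)
  linear_combination (α ^ 2 * s n * s (n + 2) - β * s (n + 1) ^ 2) * hI +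
    (s (n - 1) * s n ^ 2 * s (n + 3) - γ * (s (n - 1) * s n * s (n + 1) * s (n + 2))
      - β * s n ^ 2 * s (n + 1) ^ 2 + α ^ 2 * s n ^ 3 * s (n + 2)
      + α ^ 2 * s (n - 1) * s (n + 1) ^ 3) * hS

theorem CubicAt.of_somos4InvariantAt (hs : s (n - 2) ≠ 0) (hS : Somos4At α β s n)
    (hI : Somos4InvariantAt α β γ s (n - 1)) : CubicAt α γ s n := by
  rw [Somos4InvariantAt, show n - 1 - 1 = n - 2 by ring, show n - 1 + 2 = n + 1 by ring,
    show n - 1 + 1 = n by ring] at hI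
  rw [Somos4At] at hS
  rw [CubicAt]
  apply mul_left_cancel₀ hs
  linear_combination hI + s (n - 1) ^ 2 * hS

end Somos4

section Ward

variable {R : Type*} [CommRing R] {α β γ : R} {W : ℤ → R}

theorem somos4At_ward (hWm1 : W (-1) = -1) (hW0 : W 0 = 0) (hW1 : W 1 = 1) (hW2 : W 2 = α)
    (hW3 : W 3 = β) (hWrec : ∀ m, 3 ≤ m → Somos4At α β W m) :
    ∀ m, 1 ≤ m → Somos4At α β W m := by
  intro m hm
  obtain rfl | rfl | hm3 : m = 1 ∨ m = 2 ∨ 3 ≤ m := by omega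
  · norm_num [Somos4At, hWm1, hW0, hW1, hW2, hW3]
  · simp only [Somos4At, Int.reduceSub, Int.reduceAdd, hW0, hW1, hW2, hW3]
    ring
  · exact hWrec m hm3

theorem somos4InvariantAt_ward [IsDomain R] (hW1 : W 1 = 1) (hW2 : W 2 = α) (hW3 : W 3 = β)
    (hW4 : W 4 = α * β * γ - α ^ 5) (hWne : ∀ m, 1 ≤ m → W m ≠ 0)
    (hS : ∀ m, 1 ≤ m → Somos4At α β W m) : ∀ m, 2 ≤ m → Somos4InvariantAt α β γ W m := by
  refine Int.leInduction ?_ fun n hn ih => ih.succ (hWne _ (by omega)) (hS _ (by omega))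
  simp only [Somos4InvariantAt, Int.reduceSub, Int.reduceAdd, hW1, hW2, hW3, hW4]
  ring

theorem cubicAt_ward [IsDomain R] (hWm1 : W (-1) = -1) (hW0 : W 0 = 0) (hW1 : W 1 = 1) (hW2 : W 2 = α)
    (hW3 : W 3 = β) (hW4 : W 4 = α * β * γ - α ^ 5) (hWne : ∀ m, 1 ≤ m → W m ≠ 0)
    (hS : ∀ m, 1 ≤ m → Somos4At α β W m) : ∀ m, 1 ≤ m → CubicAt α γ W m := by
  intro m hm
  obtain rfl | rfl | hm3 : m = 1 ∨ m = 2 ∨ 3 ≤ m := by omega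
  · norm_num [CubicAt, hWm1, hW0, hW1, hW2, hW3]
  · simp only [CubicAt, Int.reduceSub, Int.reduceAdd, hW0, hW1, hW2, hW3, hW4]
    ring
  · exact .of_somos4InvariantAt (hWne _ (by omega)) (hS m hm)
      (somos4InvariantAt_ward hW1 hW2 hW3 hW4 hWne hS _ (by omega))

end Ward

section Gap

variable {R : Type*} [CommRing R] {α β γ : R} {A W : ℤ → R} {m : ℤ}

theorem gapIdentity_zero (hWm1 : W (-1) = -1) (hW0 : W 0 = 0) (hW1 : W 1 = 1) :
    GapIdentity A W 0 := by
  intro h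
  simp only [sub_zero, add_zero, zero_sub, zero_add, hWm1, hW0, hW1]
  ring

theorem gapIdentity_one (hW0 : W 0 = 0) (hW1 : W 1 = 1) : GapIdentity A W 1 := by
  intro h
  simp [hW0, hW1]

theorem GapIdentity.succ [IsDomain R] (hA : ∀ h, A h ≠ 0) (hSA : ∀ h, Somos4At α β A h)
    (hCA : ∀ h, CubicAt α γ A h) (hSW : Somos4At α β W m) (hCW : CubicAt α γ W m)
    (hm : GapIdentity A W m) (hm₁ : GapIdentity A W (m - 1)) : GapIdentity A W (m + 1) := by
  intro h
  have hprod : A (h - (m + 1)) * A (h + (m + 1)) * (A (h - (m - 1)) * A (h + (m - 1))) =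
      A (h - 1 - m) * A (h - 1 + m) * (A (h + 1 - m) * A (h + 1 + m)) := by
    rw [show h - (m + 1) = h - 1 - m by ring, show h + (m + 1) = h + 1 + m by ring,
      show h - (m - 1) = h + 1 - m by ring, show h + (m - 1) = h - 1 + m by ring]
    ring
  have hnz : A (h - (m - 1)) * A (h + (m - 1)) ≠ 0 := mul_ne_zero (hA _) (hA _)
  rw [hm, hm, show h - 1 - 1 = h - 2 by ring, show h - 1 + 1 = h by ring,
    show h + 1 - 1 = h by ring, show h + 1 + 1 = h + 2 by ring] at hprod
  rw [hm₁ h, show m - 1 - 1 = m - 2 by ring, show m - 1 + 1 = m by ring] at hprod hnz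
  apply mul_right_cancel₀ hnz
  rw [hprod, show m + 1 - 1 = m by ring, show m + 1 + 1 = m + 2 by ring]
  have hSh := hSA h
  have hCh := hCA h
  rw [Somos4At] at hSh hSW
  rw [CubicAt] at hCh hCW
  linear_combination (W m ^ 4 * A h ^ 2) * hSh
    - (W (m - 1) * W m ^ 2 * W (m + 1) * A h) * hCh
    - (W m ^ 2 * A h ^ 4) * hSW
    + (W m * A (h - 1) * A h ^ 2 * A (h + 1)) * hCW

theorem gapIdentity_natCast [IsDomain R] (hA : ∀ h, A h ≠ 0) (hSA : ∀ h, Somos4At α β A h)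
    (hCA : ∀ h, CubicAt α γ A h) (hSW : ∀ m, 1 ≤ m → Somos4At α β W m)
    (hCW : ∀ m, 1 ≤ m → CubicAt α γ W m) (h0 : GapIdentity A W 0) (h1 : GapIdentity A W 1)
    (n : ℕ) : GapIdentity A W n := by
  induction n using Nat.twoStepInduction with
  | zero => exact h0
  | one => exact h1
  | more n ih₀ ih₁ =>
    have := GapIdentity.succ hA hSA hCA (hSW (n + 1) (by omega)) (hCW (n + 1) (by omega))
      (by simpa using ih₁) (by simpa using ih₀)
    simpa [add_assoc] using this

theorem GapIdentity.neg (hW : ∀ m, W (-m) = -W m) (hm : GapIdentity A W m) :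
    GapIdentity A W (-m) := by
  intro h
  rw [sub_neg_eq_add, ← sub_eq_add_neg, mul_comm, hm, show -m - 1 = -(m + 1) by ring,
    show -m + 1 = -(m - 1) by ring, hW, hW, hW]
  ring

end Gap

theorem somos_even_gap_from_elliptic {K : Type*} [Field K] (α β γ : K)
    (A : ℤ → K) (hA : ∀ h : ℤ, A h ≠ 0)
    (e : ℤ → K) (he : ∀ h : ℤ, e h = A (h - 1) * A (h + 1) / (A h) ^ 2)
    (he1 : ∀ h : ℤ, e (h - 1) * (e h) ^ 2 * e (h + 1) = α ^ 2 * e h - β)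
    (he2 : ∀ h : ℤ, (e (h - 1) + e (h + 1)) * (e h) ^ 2 = γ * e h - α ^ 2)
    (W : ℤ → K)
    (hWneg : ∀ m : ℤ, W (-m) = -W m)
    (hW0 : W 0 = 0)
    (hWne : ∀ m : ℤ, 1 ≤ m → W m ≠ 0)
    (hW1 : W 1 = 1) (hW2 : W 2 = α) (hW3 : W 3 = β)
    (hW4 : W 4 = α * β * γ - α ^ 5)
    (hWrec : ∀ m : ℤ, 3 ≤ m →
      W (m - 2) * W (m + 2) = α ^ 2 * W (m - 1) * W (m + 1) - β * (W m) ^ 2) :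
    ∀ h m : ℤ,
      (W 1) ^ 2 * (A (h - m) * A (h + m)) =
        (W m) ^ 2 * (A (h - 1) * A (h + 1)) - W (m - 1) * W (m + 1) * (A h) ^ 2 := by
  have hWm1 : W (-1) = -1 := by rw [hWneg, hW1]
  have hSA h := somos4At_of_ellipticRatio hA he (he1 h)
  have hCA h := cubicAt_of_ellipticRatio hA he (he2 h)
  have hSW := somos4At_ward hWm1 hW0 hW1 hW2 hW3 hWrec
  have hCW := cubicAt_ward hWm1 hW0 hW1 hW2 hW3 hW4 hWne hSW
  have hgap (n : ℕ) : GapIdentity A W n :=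
    gapIdentity_natCast hA hSA hCA hSW hCW (gapIdentity_zero hWm1 hW0 hW1)
      (gapIdentity_one hW0 hW1) n
  intro h m
  rw [hW1, one_pow, one_mul]
  obtain ⟨n, rfl | rfl⟩ := Int.eq_nat_or_neg m
  · exact hgap n h
  · exact (hgap n).neg hWneg h
end

section
/- Let K be a field and let α, β, γ ∈ K. Let A : ℤ → K satisfy A h ≠ 0 for all h, and set e h = A(h−1)·A(h+1)/A(h)². Assume that for all h ∈ ℤ: e(h−1)·e(h)²·e(h+1) = α²·e(h) − β and (e(h−1) + e(h+1))·e(h)² = γ·e(h) − α². Let W : ℤ → K satisfy W(−m) = −W(m) for all m ∈ ℤ, W(0) = 0, W(m) ≠ 0 for all m ≥ 1, W(1) = 1, W(2) = α, W(3) = β, W(4) = αβγ − α⁵, and W(m−2)·W(m+2) = α²·W(m−1)·W(m+1) − β·W(m)² for all m ≥ 3. Then for all h ∈ ℤ and all m ∈ ℤ: W(1)·W(2)·A(h−m)·A(h+m+1) = W(m)·W(m+1)·A(h−1)·A(h+2) − W(m−1)·W(m+2)·A(h)·A(h+1). -/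
theorem somos_odd_gap_from_elliptic {K : Type*} [Field K] (α β γ : K)
    (A : ℤ → K) (hA : ∀ h : ℤ, A h ≠ 0)
    (e : ℤ → K) (he : ∀ h : ℤ, e h = A (h - 1) * A (h + 1) / (A h) ^ 2)
    (he1 : ∀ h : ℤ, e (h - 1) * (e h) ^ 2 * e (h + 1) = α ^ 2 * e h - β)
    (he2 : ∀ h : ℤ, (e (h - 1) + e (h + 1)) * (e h) ^ 2 = γ * e h - α ^ 2)
    (W : ℤ → K)
    (hWneg : ∀ m : ℤ, W (-m) = -W m)
    (hW0 : W 0 = 0)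
    (hWne : ∀ m : ℤ, 1 ≤ m → W m ≠ 0)
    (hW1 : W 1 = 1) (hW2 : W 2 = α) (hW3 : W 3 = β)
    (hW4 : W 4 = α * β * γ - α ^ 5)
    (hWrec : ∀ m : ℤ, 3 ≤ m →
      W (m - 2) * W (m + 2) = α ^ 2 * W (m - 1) * W (m + 1) - β * (W m) ^ 2) :
    ∀ h m : ℤ,
      W 1 * W 2 * (A (h - m) * A (h + m + 1)) =
        W m * W (m + 1) * (A (h - 1) * A (h + 2)) -
          W (m - 1) * W (m + 2) * (A h * A (h + 1)) := by
  have hαne : α ≠ 0 := hW2 ▸ hWne 2 (by norm_num)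
  have hWm1 : W (-1) = -1 := by rw [hWneg 1, hW1]
  have hW12 : W 1 * W 2 = α := by rw [hW1, hW2]; ring
  -- basic product identities for A and e
  have hp : ∀ h : ℤ, A (h - 1) * A (h + 1) = e h * A h ^ 2 := by
    intro h
    rw [he h]
    exact (div_mul_cancel₀ _ (pow_ne_zero 2 (hA h))).symm
  have hr : ∀ h : ℤ, A (h - 1) * A (h + 2) = e h * e (h + 1) * (A h * A (h + 1)) := by
    intro h
    have p1 := hp h
    have p2 := hp (h + 1)
    rw [show h + 1 - 1 = h by ring, show h + 1 + 1 = h + 2 by ring] at p2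
    have key : (A (h - 1) * A (h + 2)) * (A h * A (h + 1)) =
        (e h * e (h + 1) * (A h * A (h + 1))) * (A h * A (h + 1)) := by
      linear_combination (A h * A (h + 2)) * p1 + (e h * A h ^ 2) * p2
    exact mul_right_cancel₀ (mul_ne_zero (hA h) (hA (h + 1))) key
  have hE : ∀ h : ℤ, (e h) ^ 2 * (e (h + 1)) ^ 2 =
      γ * (e h * e (h + 1)) - α ^ 2 * (e h + e (h + 1)) + β := by
    intro h
    linear_combination e (h + 1) * he2 h - he1 h
  -- Somos-4 for W, valid for all m ≥ 1
  have hL1 : ∀ m : ℤ, 1 ≤ m →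
      W (m - 2) * W (m + 2) = α ^ 2 * (W (m - 1) * W (m + 1)) - β * W m ^ 2 := by
    intro m hm
    rcases lt_or_ge m 3 with h3 | h3
    · interval_cases m
      · rw [show (1 : ℤ) - 2 = -1 by norm_num, show (1 : ℤ) + 2 = 3 by norm_num,
          show (1 : ℤ) - 1 = 0 by norm_num, show (1 : ℤ) + 1 = 2 by norm_num,
          hWm1, hW3, hW0, hW1]
        ring
      · rw [show (2 : ℤ) - 2 = 0 by norm_num, show (2 : ℤ) + 2 = 4 by norm_num,
          show (2 : ℤ) - 1 = 1 by norm_num, show (2 : ℤ) + 1 = 3 by norm_num,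
          hW0, hW1, hW3, hW2]
        ring
    · linear_combination hWrec m h3
  -- second invariant identity for W, for m ≥ 2
  have hX2 : ∀ m : ℤ, 2 ≤ m →
      W (m - 2) * W (m + 1) ^ 2 + W (m + 2) * W (m - 1) ^ 2 =
        γ * (W (m - 1) * (W m * W (m + 1))) - α ^ 2 * W m ^ 3 := by
    refine Int.le_induction ?_ ?_
    · rw [show (2 : ℤ) - 2 = 0 by norm_num, show (2 : ℤ) + 1 = 3 by norm_num,
        show (2 : ℤ) + 2 = 4 by norm_num, show (2 : ℤ) - 1 = 1 by norm_num,
        hW0, hW3, hW4, hW1, hW2]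
      ring
    · intro n hn ih
      rw [show n + 1 - 2 = n - 1 by ring, show n + 1 + 1 = n + 2 by ring,
        show n + 1 + 2 = n + 3 by ring, show n + 1 - 1 = n by ring]
      have hb : W (n - 1) ≠ 0 := hWne _ (by omega)
      have l1 := hL1 n (by omega)
      have l2 := hL1 (n + 1) (by omega)
      rw [show n + 1 - 2 = n - 1 by ring, show n + 1 + 2 = n + 3 by ring,
        show n + 1 - 1 = n by ring, show n + 1 + 1 = n + 2 by ring] at l2
      apply mul_left_cancel₀ hb
      linear_combination W (n + 2) * ih + W n ^ 2 * l2 - W (n + 1) ^ 2 * l1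
  -- second invariant identity for W, for m ≥ 1
  have hX : ∀ m : ℤ, 1 ≤ m →
      W (m - 2) * W (m + 1) ^ 2 + W (m + 2) * W (m - 1) ^ 2 =
        γ * (W (m - 1) * (W m * W (m + 1))) - α ^ 2 * W m ^ 3 := by
    intro m hm
    rcases eq_or_lt_of_le hm with h1 | h1
    · rw [← h1]
      rw [show (1 : ℤ) - 2 = -1 by norm_num, show (1 : ℤ) + 1 = 2 by norm_num,
        show (1 : ℤ) + 2 = 3 by norm_num, show (1 : ℤ) - 1 = 0 by norm_num,
        hWm1, hW2, hW3, hW0, hW1]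
      ring
    · exact hX2 m h1
  -- the even-gap identity Q, by two-step induction
  have QQ : ∀ m : ℤ, 0 ≤ m →
      ((∀ h : ℤ, A (h - m) * A (h + m) =
          (W m ^ 2 * e h - W (m - 1) * W (m + 1)) * A h ^ 2) ∧
       (∀ h : ℤ, A (h - (m + 1)) * A (h + (m + 1)) =
          (W (m + 1) ^ 2 * e h - W (m + 1 - 1) * W (m + 1 + 1)) * A h ^ 2)) := by
    refine Int.le_induction ?_ ?_
    · constructor
      · intro h
        rw [show h - (0 : ℤ) = h by ring, show h + (0 : ℤ) = h by ring, hW0,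
          show (0 : ℤ) - 1 = -1 by norm_num, show (0 : ℤ) + 1 = 1 by norm_num,
          hWm1, hW1]
        ring
      · intro h
        rw [show (0 : ℤ) + 1 = 1 by norm_num, show h - (1 : ℤ) = h - 1 by ring,
          show (1 : ℤ) - 1 = 0 by norm_num, show (1 : ℤ) + 1 = 2 by norm_num,
          hW1, hW0]
        linear_combination hp h
    · intro n hn ih
      constructor
      · exact ih.2
      · intro h
        rw [show h - (n + 1 + 1) = h - n - 2 by ring,
          show h + (n + 1 + 1) = h + n + 2 by ring,
          show n + 1 + 1 - 1 = n + 1 by ring,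
          show n + 1 + 1 + 1 = n + 3 by ring,
          show n + 1 + 1 = n + 2 by ring]
        have i0 := ih.1 h
        have i1 := ih.2 (h - 1)
        rw [show h - 1 - (n + 1) = h - n - 2 by ring,
          show h - 1 + (n + 1) = h + n by ring,
          show n + 1 - 1 = n by ring, show n + 1 + 1 = n + 2 by ring] at i1
        have i2 := ih.2 (h + 1)
        rw [show h + 1 - (n + 1) = h - n by ring,
          show h + 1 + (n + 1) = h + n + 2 by ring,
          show n + 1 - 1 = n by ring, show n + 1 + 1 = n + 2 by ring] at i2
        have hX' := hX (n + 1) (by omega)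
        rw [show n + 1 - 2 = n - 1 by ring, show n + 1 + 1 = n + 2 by ring,
          show n + 1 + 2 = n + 3 by ring, show n + 1 - 1 = n by ring] at hX'
        have hL1' := hL1 (n + 1) (by omega)
        rw [show n + 1 - 2 = n - 1 by ring, show n + 1 + 2 = n + 3 by ring,
          show n + 1 - 1 = n by ring, show n + 1 + 1 = n + 2 by ring] at hL1'
        have hpp : A (h - 1) ^ 2 * A (h + 1) ^ 2 = (e h) ^ 2 * A h ^ 4 := by
          linear_combination (A (h - 1) * A (h + 1) + e h * A h ^ 2) * hp h
        have t0 : A (h - n) * A (h + n) ≠ 0 := mul_ne_zero (hA _) (hA _)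
        have hkey : (A (h - n - 2) * A (h + n + 2)) * (A (h - n) * A (h + n)) =
            ((W (n + 2) ^ 2 * e h - W (n + 1) * W (n + 3)) * A h ^ 2) *
              (A (h - n) * A (h + n)) := by
          calc (A (h - n - 2) * A (h + n + 2)) * (A (h - n) * A (h + n))
              = (A (h - n - 2) * A (h + n)) * (A (h - n) * A (h + n + 2)) := by ring
            _ = ((W (n + 1) ^ 2 * e (h - 1) - W n * W (n + 2)) * A (h - 1) ^ 2) *
                  ((W (n + 1) ^ 2 * e (h + 1) - W n * W (n + 2)) * A (h + 1) ^ 2) := by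
                rw [i1, i2]
            _ = ((W (n + 2) ^ 2 * e h - W (n + 1) * W (n + 3)) * A h ^ 2) *
                  ((W n ^ 2 * e h - W (n - 1) * W (n + 1)) * A h ^ 2) := by
                linear_combination
                  (A h ^ 4) * ((W (n + 1)) ^ 4 * he1 h
                    - (W (n + 1)) ^ 2 * (W n) * (W (n + 2)) * he2 h
                    + (W (n + 1)) * (e h) * hX'
                    - (W (n + 1)) ^ 2 * hL1')
                  + ((W (n + 1)) ^ 4 * (e (h - 1) * e (h + 1))
                    - (W (n + 1)) ^ 2 * (W n * W (n + 2)) * (e (h - 1) + e (h + 1))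
                    + (W n) ^ 2 * (W (n + 2)) ^ 2) * hpp
            _ = ((W (n + 2) ^ 2 * e h - W (n + 1) * W (n + 3)) * A h ^ 2) *
                  (A (h - n) * A (h + n)) := by rw [i0]
        exact mul_right_cancel₀ t0 hkey
  -- the odd-gap identity P, by induction
  have PP : ∀ m : ℤ, 0 ≤ m → ∀ h : ℤ,
      α * (A (h - m) * A (h + m + 1)) =
        W m * W (m + 1) * (A (h - 1) * A (h + 2)) -
          W (m - 1) * W (m + 2) * (A h * A (h + 1)) := by
    refine Int.le_induction ?_ ?_
    · intro h
      rw [show h - (0 : ℤ) = h by ring, show h + (0 : ℤ) + 1 = h + 1 by ring,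
        show (0 : ℤ) - 1 = -1 by norm_num, show (0 : ℤ) + 1 = 1 by norm_num,
        show (0 : ℤ) + 2 = 2 by norm_num, hW0, hWm1, hW2]
      ring
    · intro n hn ih h
      rw [show h - (n + 1) = h - n - 1 by ring,
        show h + (n + 1) + 1 = h + n + 2 by ring,
        show n + 1 + 1 = n + 2 by ring, show n + 1 - 1 = n by ring,
        show n + 1 + 2 = n + 3 by ring]
      have q1 := (QQ n hn).2 h
      rw [show h - (n + 1) = h - n - 1 by ring, show h + (n + 1) = h + n + 1 by ring,
        show n + 1 - 1 = n by ring, show n + 1 + 1 = n + 2 by ring] at q1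
      have q2 := (QQ n hn).2 (h + 1)
      rw [show h + 1 - (n + 1) = h - n by ring,
        show h + 1 + (n + 1) = h + n + 2 by ring,
        show n + 1 - 1 = n by ring, show n + 1 + 1 = n + 2 by ring] at q2
      have hX' := hX (n + 1) (by omega)
      rw [show n + 1 - 2 = n - 1 by ring, show n + 1 + 1 = n + 2 by ring,
        show n + 1 + 2 = n + 3 by ring, show n + 1 - 1 = n by ring] at hX'
      have hL1' := hL1 (n + 1) (by omega)
      rw [show n + 1 - 2 = n - 1 by ring, show n + 1 + 2 = n + 3 by ring,
        show n + 1 - 1 = n by ring, show n + 1 + 1 = n + 2 by ring] at hL1'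
      have ihh := ih h
      have hkey : (α * (A (h - n - 1) * A (h + n + 2))) * (α * (A (h - n) * A (h + n + 1))) =
          (W (n + 1) * W (n + 2) * (A (h - 1) * A (h + 2)) -
            W n * W (n + 3) * (A h * A (h + 1))) * (α * (A (h - n) * A (h + n + 1))) := by
        calc (α * (A (h - n - 1) * A (h + n + 2))) * (α * (A (h - n) * A (h + n + 1)))
            = α ^ 2 * ((A (h - n - 1) * A (h + n + 1)) * (A (h - n) * A (h + n + 2))) := by
              ring
          _ = α ^ 2 * (((W (n + 1) ^ 2 * e h - W n * W (n + 2)) * A h ^ 2) *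
                ((W (n + 1) ^ 2 * e (h + 1) - W n * W (n + 2)) * A (h + 1) ^ 2)) := by
              rw [q1, q2]
          _ = (W (n + 1) * W (n + 2) * (A (h - 1) * A (h + 2)) -
                W n * W (n + 3) * (A h * A (h + 1))) *
              (W n * W (n + 1) * (A (h - 1) * A (h + 2)) -
                W (n - 1) * W (n + 2) * (A h * A (h + 1))) := by
              rw [hr h]
              linear_combination (A h * A (h + 1)) ^ 2 *
                (-(W n * W (n + 1) ^ 2 * W (n + 2)) * hE h
                  + (W (n + 1) * (e h * e (h + 1))) * hX'
                  - (W n * W (n + 2)) * hL1')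
          _ = (W (n + 1) * W (n + 2) * (A (h - 1) * A (h + 2)) -
                W n * W (n + 3) * (A h * A (h + 1))) *
              (α * (A (h - n) * A (h + n + 1))) := by rw [ihh]
      exact mul_right_cancel₀
        (mul_ne_zero hαne (mul_ne_zero (hA _) (hA _))) hkey
  -- conclude
  intro h m
  rcases le_or_gt 0 m with hm | hm
  · have := PP m hm h
    linear_combination this + (A (h - m) * A (h + m + 1)) * hW12
  · have hp0 := PP (-m - 1) (by omega) h
    rw [show h - (-m - 1) = h + m + 1 by ring] at hp0
    rw [show h + (-m - 1) + 1 = h - m by ring] at hp0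
    rw [show -m - 1 + 1 = -m by ring] at hp0
    rw [show -m - 1 - 1 = -(m + 2) by ring] at hp0
    rw [show -m - 1 + 2 = -(m - 1) by ring] at hp0
    rw [show -m - 1 = -(m + 1) by ring] at hp0
    rw [hWneg (m + 1), hWneg m, hWneg (m + 2), hWneg (m - 1)] at hp0
    linear_combination hp0 + (A (h - m) * A (h + m + 1)) * hW12
end

section
/- Let K be a field, let A : ℤ → K satisfy A h ≠ 0 for all h, and suppose there are λ, μ ∈ K such that A(h−2)·A(h+2) = λ·A(h−1)·A(h+1) + μ·A(h)² for all h ∈ ℤ (i.e., A is a Somos 4 sequence). Then for every integer m ≥ 2 there exist constants a, b ∈ K such that A(h−m)·A(h+m) = a·A(h−1)·A(h+1) + b·A(h)² for all h ∈ ℤ; that is, A is a three-term Somos 2m sequence for every m ≥ 2. -/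
/-!
The Somos 4 recurrence has the conserved quantity
`J = (A(h-2)A(h+1)^2 A(h) + A(h-1)^2 A(h)A(h+2) + λ A(h)^4) / (A(h-1)A(h+1)A(h)^2)`.
Writing `X = A(h-1)A(h+1)`, `Y = A(h)^2` and assuming the three-term relations for `m - 1` and
`m` with coefficients `(a', b')` and `(a, b)`, the product
`A(h-m-1)A(h+m+1) · A(h-m+1)A(h+m-1)` regroups as `A(h-m-1)A(h+m-1) · A(h-m+1)A(h+m+1)`,
which by the recurrence and `J` is the binary quadratic form
`Q_{a,b}(X, Y) = b²X² + (λa² + Jab)XY + (μa² - λab)Y²`. If the linear form `a'X + b'Y` divides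
`Q_{a,b}`, the cofactor gives the relation for `m + 1`. Divisibility means `Q_{a,b}(b', -a') = 0`,
and this condition is symmetric in the two pairs, so it propagates to the next step.
-/

section

variable {K : Type*} [Field K] {A : ℤ → K} {lam mu J : K}

def IsThreeTermSomos (A : ℤ → K) (m : ℤ) (a b : K) : Prop :=
  ∀ h : ℤ, A (h - m) * A (h + m) = a * (A (h - 1) * A (h + 1)) + b * A h ^ 2

def IsSomos4Invariant (A : ℤ → K) (lam J : K) : Prop :=
  ∀ h : ℤ, A (h - 2) * A h * A (h + 1) ^ 2 + A (h - 1) ^ 2 * (A h * A (h + 2)) + lam * A h ^ 4 =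
    J * (A (h - 1) * A (h + 1) * A h ^ 2)

def somosQuad (lam mu J a b X Y : K) : K :=
  b ^ 2 * X ^ 2 + (lam * a ^ 2 + J * a * b) * X * Y + (mu * a ^ 2 - lam * a * b) * Y ^ 2

theorem somosQuad_swap (lam mu J a b c d : K) :
    somosQuad lam mu J a b d (-c) = somosQuad lam mu J c d b (-a) := by
  unfold somosQuad; ring

theorem exists_linear_cofactor_of_root {α β γ u v : K} (huv : u ≠ 0 ∨ v ≠ 0)
    (hroot : α * v ^ 2 - β * u * v + γ * u ^ 2 = 0) :
    ∃ c d : K, ∀ X Y : K,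
      α * X ^ 2 + β * X * Y + γ * Y ^ 2 = (c * X + d * Y) * (u * X + v * Y) := by
  by_cases hu : u = 0
  · have hv : v ≠ 0 := huv.resolve_left (by simpa using hu)
    subst hu
    have hα : α = 0 := by simpa [hv] using hroot
    refine ⟨β / v, γ / v, fun X Y => ?_⟩
    subst hα
    field_simp
    ring
  · refine ⟨α / u, (β * u - α * v) / u ^ 2, fun X Y => ?_⟩
    field_simp
    linear_combination Y ^ 2 * hroot

theorem isThreeTermSomos_one (A : ℤ → K) : IsThreeTermSomos A 1 1 0 := fun h => by ring

theorem IsThreeTermSomos.coeff_ne_zero (hA : ∀ h, A h ≠ 0) {m : ℤ} {a b : K}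
    (hm : IsThreeTermSomos A m a b) : a ≠ 0 ∨ b ≠ 0 := by
  by_contra! hab
  have h0 := hm 0
  rw [hab.1, hab.2] at h0
  exact mul_ne_zero (hA _) (hA _) (by simpa using h0)

theorem exists_somos4_invariant (hA : ∀ h, A h ≠ 0) (hrec : IsThreeTermSomos A 2 lam mu) :
    ∃ J : K, IsSomos4Invariant A lam J := by
  set U : ℤ → K := fun h => A (h - 1) * A (h + 1) * A h ^ 2
  set W : ℤ → K := fun h =>
    A (h - 2) * A h * A (h + 1) ^ 2 + A (h - 1) ^ 2 * (A h * A (h + 2)) + lam * A h ^ 4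
  have hU : ∀ h, U h ≠ 0 := fun h => by simp [U, hA]
  have hper : Function.Periodic (fun h => W h / U h) 1 := by
    intro h
    have e1 := hrec h
    have e2 := hrec (h + 1)
    simp only [U, W, div_eq_div_iff (hU _) (hU _)]
    simp only [show h + 1 - 2 = h - 1 by ring, show h + 1 - 1 = h by ring,
      show h + 1 + 1 = h + 2 by ring, show h + 1 + 2 = h + 3 by ring] at e2 ⊢
    linear_combination A h ^ 4 * A (h + 1) ^ 2 * e2 - A h ^ 2 * A (h + 1) ^ 4 * e1
  refine ⟨W 0 / U 0, fun h => ?_⟩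
  have hconst : W h / U h = W 0 / U 0 := by simpa using hper.int_mul_eq h
  rw [← hconst, div_mul_cancel₀ _ (hU h)]

theorem IsThreeTermSomos.mul_eq_somosQuad {m : ℤ} {a b : K} (hm : IsThreeTermSomos A m a b)
    (hrec : IsThreeTermSomos A 2 lam mu) (hJ : IsSomos4Invariant A lam J) (h : ℤ) :
    A (h - (m + 1)) * A (h + (m + 1)) * (A (h - (m - 1)) * A (h + (m - 1))) =
      somosQuad lam mu J a b (A (h - 1) * A (h + 1)) (A h ^ 2) := by
  have left : A (h - (m + 1)) * A (h + (m - 1)) = a * (A (h - 2) * A h) + b * A (h - 1) ^ 2 := by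
    have := hm (h - 1)
    rwa [show h - 1 - m = h - (m + 1) by ring, show h - 1 + m = h + (m - 1) by ring,
      show h - 1 - 1 = h - 2 by ring, sub_add_cancel] at this
  have right : A (h - (m - 1)) * A (h + (m + 1)) = a * (A h * A (h + 2)) + b * A (h + 1) ^ 2 := by
    have := hm (h + 1)
    rwa [show h + 1 - m = h - (m - 1) by ring, show h + 1 + m = h + (m + 1) by ring,
      add_sub_cancel_right, show h + 1 + 1 = h + 2 by ring] at this
  calc A (h - (m + 1)) * A (h + (m + 1)) * (A (h - (m - 1)) * A (h + (m - 1)))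
      = (A (h - (m + 1)) * A (h + (m - 1))) * (A (h - (m - 1)) * A (h + (m + 1))) := by ring
    _ = _ := by
      rw [left, right, somosQuad]
      linear_combination a ^ 2 * A h ^ 2 * hrec h + a * b * hJ h

theorem IsThreeTermSomos.succ {m : ℤ} {a b a' b' c d : K} (hm : IsThreeTermSomos A m a b)
    (hA : ∀ h, A h ≠ 0) (hrec : IsThreeTermSomos A 2 lam mu) (hJ : IsSomos4Invariant A lam J)
    (hm' : IsThreeTermSomos A (m - 1) a' b')
    (hfac : ∀ X Y : K, somosQuad lam mu J a b X Y = (c * X + d * Y) * (a' * X + b' * Y)) :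
    IsThreeTermSomos A (m + 1) c d := fun h =>
  mul_right_cancel₀ (mul_ne_zero (hA _) (hA _)) <| by
    rw [hm.mul_eq_somosQuad hrec hJ h, hfac, hm' h]

theorem exists_isThreeTermSomos_consecutive (hA : ∀ h, A h ≠ 0)
    (hrec : IsThreeTermSomos A 2 lam mu) (hJ : IsSomos4Invariant A lam J) {m : ℤ} (hm : 2 ≤ m) :
    ∃ a b a' b' : K, IsThreeTermSomos A m a b ∧ IsThreeTermSomos A (m - 1) a' b' ∧
      somosQuad lam mu J a b b' (-a') = 0 := by
  induction m, hm using Int.leInduction with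
  | base => exact ⟨lam, mu, 1, 0, hrec, isThreeTermSomos_one A, by unfold somosQuad; ring⟩
  | succ m _ ih =>
    obtain ⟨a, b, a', b', hm, hm', hroot⟩ := ih
    obtain ⟨c, d, hfac⟩ := exists_linear_cofactor_of_root (α := b ^ 2)
      (β := lam * a ^ 2 + J * a * b) (γ := mu * a ^ 2 - lam * a * b) (hm'.coeff_ne_zero hA)
      (by unfold somosQuad at hroot; linear_combination hroot)
    refine ⟨c, d, a, b, hm.succ hA hrec hJ hm' hfac, by rwa [add_sub_cancel_right], ?_⟩
    rw [← somosQuad_swap, somosQuad, hfac]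
    ring

end

theorem somos4_is_somos_even {K : Type*} [Field K] (A : ℤ → K)
    (hA : ∀ h : ℤ, A h ≠ 0) (lam mu : K)
    (hrec : ∀ h : ℤ, A (h - 2) * A (h + 2) = lam * (A (h - 1) * A (h + 1)) + mu * (A h) ^ 2) :
    ∀ m : ℤ, 2 ≤ m → ∃ a b : K,
      ∀ h : ℤ, A (h - m) * A (h + m) = a * (A (h - 1) * A (h + 1)) + b * (A h) ^ 2 := by
  intro m hm
  obtain ⟨J, hJ⟩ := exists_somos4_invariant hA hrec
  obtain ⟨a, b, -, -, hab, -⟩ := exists_isThreeTermSomos_consecutive hA hrec hJ hm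
  exact ⟨a, b, hab⟩
end

section
/- Let K be a field and let W : ℤ → K satisfy W(−h) = −W(h) for all h ∈ ℤ, W(0) = 0, W(1) = 1, W(h) ≠ 0 for all h ≥ 1, and the recurrence W(h−2)·W(h+2) = W(2)²·W(h−1)·W(h+1) − W(1)·W(3)·W(h)² for all h ≥ 3. Then for all integers h ≥ m ≥ 1: W(h−m)·W(h+m) = W(m)²·W(h−1)·W(h+1) − W(m−1)·W(m+1)·W(h)². (Morgan Ward's definition of elliptic divisibility sequences is coherent: the relation with gap parameter m = 2 entails the relation for every m.) -/
/-!
Induction on the gap `m`, two steps at a time, starting from the identity for `m = 1` and the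
hypothesis for `m = 2` (extended to every `h` by oddness). The gap-2 relations at `x` and `x + 1`
show that
`(W(x-2) W(x+1)² + W(x+2) W(x-1)² + W(2)² W(x)³) / (W(x-1) W(x) W(x+1))`
does not depend on `x ≥ 2`. Comparing its values at `x = m + 1` and `x = h` and combining with
the relations for gaps `m` and `m + 1` at `h - 1`, `h`, `h + 1` yields the relation for gap
`m + 2`, after cancelling `W(h-m) W(h+m) ≠ 0`.
-/

namespace Ward

variable {K : Type*} [Field K] {W : ℤ → K}

def GapRel (W : ℤ → K) (m h : ℤ) : Prop :=
  W (h - m) * W (h + m) = W m ^ 2 * (W (h - 1) * W (h + 1)) - W (m - 1) * W (m + 1) * W h ^ 2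

theorem gapRel_zero (hodd : ∀ h, W (-h) = -W h) (hW0 : W 0 = 0) (hW1 : W 1 = 1) (h : ℤ) :
    GapRel W 0 h := by
  have hWm1 : W (-1) = -1 := by rw [hodd, hW1]
  simp only [GapRel, sub_zero, add_zero, zero_sub, zero_add, hW0, hWm1, hW1]
  ring

theorem gapRel_one (hW0 : W 0 = 0) (hW1 : W 1 = 1) (h : ℤ) : GapRel W 1 h := by
  simp only [GapRel, sub_self, hW0, hW1]
  ring

theorem gapRel_self (hW0 : W 0 = 0) (m : ℤ) : GapRel W m m := by
  simp only [GapRel, sub_self, hW0]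
  ring

theorem gapRel_comm (hodd : ∀ h, W (-h) = -W h) (m h : ℤ) : GapRel W m h ↔ GapRel W h m := by
  have : W (m - h) = -W (h - m) := by rw [← hodd, neg_sub]
  simp only [GapRel, this, add_comm m h]
  constructor <;> intro e <;> linear_combination -e

theorem gapRel_neg (hodd : ∀ h, W (-h) = -W h) (m h : ℤ) : GapRel W m (-h) ↔ GapRel W m h := by
  have e1 : W (-h - m) = -W (h + m) := by rw [← hodd]; ring_nf
  have e2 : W (-h + m) = -W (h - m) := by rw [← hodd]; ring_nf
  have e3 : W (-h - 1) = -W (h + 1) := by rw [← hodd]; ring_nf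
  have e4 : W (-h + 1) = -W (h - 1) := by rw [← hodd]; ring_nf
  simp only [GapRel, e1, e2, e3, e4, hodd, neg_sq]
  constructor <;> intro e <;> linear_combination e

theorem gapRel_two (hodd : ∀ h, W (-h) = -W h) (hW0 : W 0 = 0) (hW1 : W 1 = 1)
    (hrec : ∀ h : ℤ, 3 ≤ h →
      W (h - 2) * W (h + 2) = W 2 ^ 2 * (W (h - 1) * W (h + 1)) - W 1 * W 3 * W h ^ 2)
    (h : ℤ) : GapRel W 2 h := by
  wlog hh : 0 ≤ h generalizing h
  · exact (gapRel_neg hodd 2 h).1 (this (-h) (by omega))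
  obtain h3 | hlt : 3 ≤ h ∨ h < 3 := le_or_gt 3 h
  · simpa [GapRel] using hrec h h3
  interval_cases h
  · exact (gapRel_comm hodd 2 0).2 (gapRel_zero hodd hW0 hW1 2)
  · exact (gapRel_comm hodd 2 1).2 (gapRel_one hW0 hW1 2)
  · exact gapRel_self hW0 2

theorem cross_mul_eq_of_cross_mul_succ {f g : ℤ → K} {a : ℤ}
    (hstep : ∀ x, f (x + 1) * g x = f x * g (x + 1)) (hg : ∀ x, a ≤ x → g x ≠ 0)
    {p h : ℤ} (hap : a ≤ p) (hph : p ≤ h) : f p * g h = f h * g p := by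
  induction h, hph using Int.leInduction with
  | base => ring
  | succ t hpt ih =>
    apply mul_right_cancel₀ (hg t (hap.trans hpt))
    linear_combination g (t + 1) * ih - g p * hstep t

def invNum (W : ℤ → K) (x : ℤ) : K :=
  W (x - 2) * W (x + 1) ^ 2 + W (x + 2) * W (x - 1) ^ 2 + W 2 ^ 2 * W x ^ 3

def invDen (W : ℤ → K) (x : ℤ) : K :=
  W (x - 1) * W x * W (x + 1)

theorem invNum_succ_mul_invDen (h2 : ∀ x, GapRel W 2 x) (x : ℤ) :
    invNum W (x + 1) * invDen W x = invNum W x * invDen W (x + 1) := by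
  have e := h2 x
  have e' := h2 (x + 1)
  simp only [GapRel, invNum, invDen] at e e' ⊢
  linear_combination (norm := ring_nf) (W x * W (x + 1)) * (W x ^ 2 * e' - W (x + 1) ^ 2 * e)

theorem invNum_mul_invDen_eq (h2 : ∀ x, GapRel W 2 x) (hne : ∀ h, 1 ≤ h → W h ≠ 0)
    {p h : ℤ} (hp : 2 ≤ p) (hph : p ≤ h) :
    invNum W p * invDen W h = invNum W h * invDen W p :=
  cross_mul_eq_of_cross_mul_succ (invNum_succ_mul_invDen h2)
    (fun x hx => by
      unfold invDen
      exact mul_ne_zero (mul_ne_zero (hne _ (by omega)) (hne _ (by omega))) (hne _ (by omega)))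
    hp hph

theorem gapRel_add_two (h2 : ∀ x, GapRel W 2 x) (hne : ∀ h, 1 ≤ h → W h ≠ 0) {m : ℤ} (hm : 1 ≤ m)
    (hRm : ∀ h, m ≤ h → GapRel W m h) (hRm1 : ∀ h, m + 1 ≤ h → GapRel W (m + 1) h)
    (h : ℤ) (hh : m + 2 ≤ h) : GapRel W (m + 2) h := by
  have e1 := hRm1 (h - 1) (by omega)
  have e2 := hRm1 (h + 1) (by omega)
  have e3 := hRm h (by omega)
  have e4 := h2 h
  have e5 := h2 (m + 1)
  have e6 := invNum_mul_invDen_eq h2 hne (p := m + 1) (h := h) (by omega) (by omega)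
  unfold GapRel at e1 e2 e3 e4 e5 ⊢
  unfold invNum invDen at e6
  apply mul_right_cancel₀ (mul_ne_zero (hne (h - m) (by omega)) (hne (h + m) (by omega)))
  linear_combination (norm := ring_nf) (W (h - m) * W (h + m + 2)) * e1 +
    (W (m + 1) ^ 2 * (W (h - 2) * W h) - W m * W (m + 2) * W (h - 1) ^ 2) * e2 -
    (W (m + 2) ^ 2 * (W (h - 1) * W (h + 1)) - W (m + 1) * W (m + 3) * W h ^ 2) * e3 +
    (W h ^ 2 * W (m + 1) ^ 4) * e4 - (W h ^ 4 * W (m + 1) ^ 2) * e5 + (W h * W (m + 1)) * e6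

theorem gapRel_of_le (hW0 : W 0 = 0) (hW1 : W 1 = 1) (h2 : ∀ x, GapRel W 2 x)
    (hne : ∀ h, 1 ≤ h → W h ≠ 0) {m : ℤ} (hm : 1 ≤ m) : ∀ h, m ≤ h → GapRel W m h := by
  suffices ∀ m, 1 ≤ m → (∀ h, m ≤ h → GapRel W m h) ∧ ∀ h, m + 1 ≤ h → GapRel W (m + 1) h from
    (this m hm).1
  intro m hm
  induction m, hm using Int.leInduction with
  | base => exact ⟨fun h _ => gapRel_one hW0 hW1 h, fun h _ => h2 h⟩
  | succ n hn ih =>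
    refine ⟨ih.2, fun h hh => ?_⟩
    rw [add_assoc, one_add_one_eq_two]
    exact gapRel_add_two h2 hne hn ih.1 ih.2 h (by omega)

end Ward

theorem ward_coherence_even {K : Type*} [Field K] (W : ℤ → K)
    (hWneg : ∀ h : ℤ, W (-h) = -W h)
    (hW0 : W 0 = 0) (hW1 : W 1 = 1)
    (hWne : ∀ h : ℤ, 1 ≤ h → W h ≠ 0)
    (hrec : ∀ h : ℤ, 3 ≤ h →
      W (h - 2) * W (h + 2) = (W 2) ^ 2 * (W (h - 1) * W (h + 1)) - W 1 * W 3 * (W h) ^ 2) :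
    ∀ h m : ℤ, 1 ≤ m → m ≤ h →
      W (h - m) * W (h + m) = (W m) ^ 2 * (W (h - 1) * W (h + 1)) -
        W (m - 1) * W (m + 1) * (W h) ^ 2 :=
  fun h _ hm hmh => Ward.gapRel_of_le hW0 hW1 (Ward.gapRel_two hWneg hW0 hW1 hrec) hWne hm h hmh
end

section
/- Let K be a field and let W : ℤ → K satisfy W(−h) = −W(h) for all h ∈ ℤ, W(0) = 0, W(1) = 1, W(h) ≠ 0 for all h ≥ 1, and the recurrence W(h−2)·W(h+2) = W(2)²·W(h−1)·W(h+1) − W(1)·W(3)·W(h)² for all h ≥ 3. Then for all integers h ≥ m ≥ 1: W(1)·W(2)·W(h−m)·W(h+m+1) = W(m)·W(m+1)·W(h−1)·W(h+2) − W(m−1)·W(m+2)·W(h)·W(h+1). -/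
section WardAux

variable {K : Type*} [Field K]

/-- Numerator of the Somos-4 conserved quantity associated to four consecutive terms. -/
def wardN (W : ℤ → K) (n : ℤ) : K :=
  (W n)^2 * (W (n+3))^2 + (W 2)^2 * ((W (n+1))^3 * W (n+3) + W n * (W (n+2))^3)
    - W 3 * (W (n+1))^2 * (W (n+2))^2

/-- Denominator of the Somos-4 conserved quantity. -/
def wardD (W : ℤ → K) (n : ℤ) : K := W n * W (n+1) * W (n+2) * W (n+3)

theorem ward_inv_eq (W : ℤ → K)
    (hW1 : W 1 = 1)
    (hWne : ∀ h : ℤ, 1 ≤ h → W h ≠ 0)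
    (hrec : ∀ h : ℤ, 3 ≤ h →
      W (h - 2) * W (h + 2) = (W 2) ^ 2 * (W (h - 1) * W (h + 1)) - W 1 * W 3 * (W h) ^ 2)
    (n : ℤ) (hn : 1 ≤ n) : ∀ k : ℤ, n ≤ k →
    wardN W n * wardD W k = wardN W k * wardD W n := by
  refine Int.le_induction rfl ?_
  intro k hk ih
  have hstep : wardN W k * wardD W (k+1) = wardN W (k+1) * wardD W k := by
    have hr := hrec (k+2) (by omega)
    rw [show k+2-2 = k by ring, show k+2+2 = k+4 by ring, show k+2-1 = k+1 by ring,
      show k+2+1 = k+3 by ring, hW1] at hr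
    simp only [wardN, wardD]
    rw [show k+1+1 = k+2 by ring, show k+1+2 = k+3 by ring, show k+1+3 = k+4 by ring]
    linear_combination (W k * W (k+1) * W (k+2) * (W (k+3))^3
      - (W (k+1))^3 * W (k+2) * W (k+3) * W (k+4)) * hr
  have hdk : wardD W k ≠ 0 := by
    simp only [wardD]
    exact mul_ne_zero (mul_ne_zero (mul_ne_zero (hWne k (by omega)) (hWne (k+1) (by omega)))
      (hWne (k+2) (by omega))) (hWne (k+3) (by omega))
  apply mul_left_cancel₀ hdk
  linear_combination wardD W (k+1) * ih + wardD W n * hstep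

theorem ward_main (W : ℤ → K)
    (hW0 : W 0 = 0) (hW1 : W 1 = 1)
    (hWne : ∀ h : ℤ, 1 ≤ h → W h ≠ 0)
    (hrec : ∀ h : ℤ, 3 ≤ h →
      W (h - 2) * W (h + 2) = (W 2) ^ 2 * (W (h - 1) * W (h + 1)) - W 1 * W 3 * (W h) ^ 2) :
    ∀ m : ℤ, 1 ≤ m →
      (∀ h : ℤ, m ≤ h →
        W (h-m) * W (h+m) = (W m)^2 * (W (h-1) * W (h+1)) - W (m-1) * W (m+1) * (W h)^2)
      ∧ (∀ h : ℤ, m ≤ h →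
        W 2 * (W (h-m) * W (h+m+1)) =
          W m * W (m+1) * (W (h-1) * W (h+2)) - W (m-1) * W (m+2) * (W h * W (h+1))) := by
  refine Int.le_induction ?_ ?_
  ·
    constructor
    · intro h hh
      rw [show (1:ℤ)-1 = 0 by norm_num, show (1:ℤ)+1 = 2 by norm_num, hW0, hW1]
      ring
    · intro h hh
      rw [show h+1+1 = h+2 by ring, show (1:ℤ)-1 = 0 by norm_num,
        show (1:ℤ)+1 = 2 by norm_num, show (1:ℤ)+2 = 3 by norm_num, hW0, hW1]
      ring
  intro m hm ih
  obtain ⟨ihE, ihO⟩ := ih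
  have hE' : ∀ h : ℤ, m+1 ≤ h →
      W (h-(m+1)) * W (h+(m+1)) =
        (W (m+1))^2 * (W (h-1) * W (h+1)) - W (m+1-1) * W (m+1+1) * (W h)^2 := by
    intro h hh
    rw [show h-(m+1) = h-m-1 by ring, show h+(m+1) = h+m+1 by ring,
      show m+1-1 = m by ring, show m+1+1 = m+2 by ring]
    rcases eq_or_lt_of_le hm with hm1 | hm2
    · -- m = 1 : this is precisely the defining recurrence
      subst hm1
      rw [show h-1-1 = h-2 by ring, show h+1+1 = h+2 by ring,
        show (1:ℤ)+1 = 2 by norm_num, show (1:ℤ)+2 = 3 by norm_num]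
      by_cases hh2 : h = 2
      · subst hh2
        rw [show (2:ℤ)-1 = 1 by norm_num, show (2:ℤ)+1 = 3 by norm_num,
          show (2:ℤ)-2 = 0 by norm_num, hW0, hW1]
        ring
      · exact hrec h (by omega)
    · -- 2 ≤ m : generic step
      have hO1 := ihO (h-1) (by omega)
      rw [show h-1-m = h-m-1 by ring, show h-1+m+1 = h+m by ring,
        show h-1-1 = h-2 by ring, show h-1+2 = h+1 by ring, show h-1+1 = h by ring] at hO1
      have hO2 := ihO h (by omega)
      have hEm := ihE h (by omega)
      have hr := hrec h (by omega)
      rw [hW1] at hr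
      have hinv := ward_inv_eq W hW1 hWne hrec (m-1) (by omega) (h-1) (by omega)
      simp only [wardN, wardD] at hinv
      rw [show m-1+1 = m by ring, show m-1+2 = m+1 by ring, show m-1+3 = m+2 by ring,
        show h-1+1 = h by ring, show h-1+2 = h+1 by ring, show h-1+3 = h+2 by ring] at hinv
      have hA : W 2 * W 2 * (W (h-m) * W (h+m)) * W (h+2) ≠ 0 := by
        have h2 := hWne 2 (by omega)
        exact mul_ne_zero (mul_ne_zero (mul_ne_zero h2 h2)
          (mul_ne_zero (hWne (h-m) (by omega)) (hWne (h+m) (by omega))))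
          (hWne (h+2) (by omega))
      apply mul_left_cancel₀ hA
      linear_combination
        (W (h+2) * (W 2 * (W (h-m) * W (h+m+1)))) * hO1
        + (W (h+2) * (W m * W (m+1) * (W (h-2) * W (h+1))
            - W (m-1) * W (m+2) * (W (h-1) * W h))) * hO2
        + (W (h-1) * W (h+1) * W (h+2) * (W m)^2 * (W (m+1))^2
            - W h * (W (h+1))^2 * (W (m-1) * W m * W (m+1) * W (m+2))) * hr
        + (W h) * hinv
        - ((W 2)^2 * W (h+2) * ((W (m+1))^2 * (W (h-1) * W (h+1))
            - W m * W (m+2) * (W h)^2)) * hEm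
  refine ⟨hE', ?_⟩
  intro h hh
  rw [show h-(m+1) = h-m-1 by ring, show h+(m+1)+1 = h+m+2 by ring,
    show m+1+1 = m+2 by ring, show m+1-1 = m by ring, show m+1+2 = m+3 by ring]
  rcases eq_or_lt_of_le hm with hm1 | hm2
  · -- m = 1
    subst hm1
    rw [show h-1-1 = h-2 by ring, show h+1+2 = h+3 by ring,
      show (1:ℤ)+1 = 2 by norm_num, show (1:ℤ)+2 = 3 by norm_num,
      show (1:ℤ)+3 = 4 by norm_num, hW1]
    by_cases hh2 : h = 2
    · subst hh2
      rw [show (2:ℤ)-2 = 0 by norm_num, show (2:ℤ)-1 = 1 by norm_num,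
        show (2:ℤ)+2 = 4 by norm_num, show (2:ℤ)+1 = 3 by norm_num, hW0, hW1]
      ring
    · have hra := hrec h (by omega)
      rw [hW1] at hra
      have hrb := hrec (h+1) (by omega)
      rw [show h+1-2 = h-1 by ring, show h+1+2 = h+3 by ring, show h+1-1 = h by ring,
        show h+1+1 = h+2 by ring, hW1] at hrb
      have hinv1 := ward_inv_eq W hW1 hWne hrec 1 le_rfl (h-1) (by omega)
      simp only [wardN, wardD] at hinv1
      rw [show (1:ℤ)+1 = 2 by norm_num, show (1:ℤ)+2 = 3 by norm_num,
        show (1:ℤ)+3 = 4 by norm_num, show h-1+1 = h by ring, show h-1+2 = h+1 by ring,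
        show h-1+3 = h+2 by ring, hW1] at hinv1
      have hA : W 2 * (W (h-1) * W (h+2)) * W 4 ≠ 0 :=
        mul_ne_zero (mul_ne_zero (hWne 2 (by omega))
          (mul_ne_zero (hWne (h-1) (by omega)) (hWne (h+2) (by omega)))) (hWne 4 (by omega))
      apply mul_left_cancel₀ hA
      linear_combination
        ((W 2)^2 * W 4 * (W (h-1) * W (h+3))) * hra
        + ((W 2)^2 * W 4 * ((W 2)^2 * (W (h-1) * W (h+1)) - W 3 * (W h)^2)) * hrb
        + (W 2) * hinv1
  · -- 2 ≤ m
    have hEa := hE' h hh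
    rw [show h-(m+1) = h-m-1 by ring, show h+(m+1) = h+m+1 by ring,
      show m+1-1 = m by ring, show m+1+1 = m+2 by ring] at hEa
    have hEb := hE' (h+1) (by omega)
    rw [show h+1-(m+1) = h-m by ring, show h+1+(m+1) = h+m+2 by ring,
      show m+1-1 = m by ring, show m+1+1 = m+2 by ring,
      show h+1-1 = h by ring, show h+1+1 = h+2 by ring] at hEb
    have hO2 := ihO h (by omega)
    have hrm := hrec (m+1) (by omega)
    rw [show m+1-2 = m-1 by ring, show m+1+2 = m+3 by ring, show m+1-1 = m by ring,
      show m+1+1 = m+2 by ring, hW1] at hrm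
    have hinv := ward_inv_eq W hW1 hWne hrec (m-1) (by omega) (h-1) (by omega)
    simp only [wardN, wardD] at hinv
    rw [show m-1+1 = m by ring, show m-1+2 = m+1 by ring, show m-1+3 = m+2 by ring,
      show h-1+1 = h by ring, show h-1+2 = h+1 by ring, show h-1+3 = h+2 by ring] at hinv
    have hA : W 2 * (W (h-m) * W (h+m+1)) * W (m-1) ≠ 0 :=
      mul_ne_zero (mul_ne_zero (hWne 2 (by omega))
        (mul_ne_zero (hWne (h-m) (by omega)) (hWne (h+m+1) (by omega))))
        (hWne (m-1) (by omega))
    apply mul_left_cancel₀ hA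
    linear_combination
      ((W 2)^2 * W (m-1) * ((W (m+1))^2 * (W h * W (h+2)) - W m * W (m+2) * (W (h+1))^2)) * hEa
      + ((W 2)^2 * W (m-1) * (W (h-m-1) * W (h+m+1))) * hEb
      - ((W (m+1) * W (m+2) * (W (h-1) * W (h+2))
          - W m * W (m+3) * (W h * W (h+1))) * W (m-1)) * hO2
      - (-(W (h-1) * W h * W (h+1) * W (h+2)) * ((W m)^2 * W (m+1))
          + ((W h)^2 * (W (h+1))^2) * (W (m-1) * W m * W (m+2))) * hrm
      + (W (m+1)) * hinv

end WardAux

theorem ward_coherence_odd {K : Type*} [Field K] (W : ℤ → K)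
    (hWneg : ∀ h : ℤ, W (-h) = -W h)
    (hW0 : W 0 = 0) (hW1 : W 1 = 1)
    (hWne : ∀ h : ℤ, 1 ≤ h → W h ≠ 0)
    (hrec : ∀ h : ℤ, 3 ≤ h →
      W (h - 2) * W (h + 2) = (W 2) ^ 2 * (W (h - 1) * W (h + 1)) - W 1 * W 3 * (W h) ^ 2) :
    ∀ h m : ℤ, 1 ≤ m → m ≤ h →
      W 1 * W 2 * (W (h - m) * W (h + m + 1)) =
        W m * W (m + 1) * (W (h - 1) * W (h + 2)) -
          W (m - 1) * W (m + 2) * (W h * W (h + 1)) := by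
  intro h m hm hmh
  obtain ⟨-, hO⟩ := ward_main W hW0 hW1 hWne hrec m hm
  have := hO h hmh
  rw [hW1]
  linear_combination this
end

section
/- Let F be a field and let E be the Weierstrass curve y² + a₁xy + a₃y = x³ + a₂x² + a₄x over F (so the coefficient a₆ is 0 and S = (0,0) lies on E); assume S is a nonsingular point of E. Then there exist constants a, β, γ ∈ F, depending only on the curve E and independent both of the integer parameter h and of the translating point M, such that for every point M in the group of points of E and every h ∈ ℤ the following holds: if the points M + (h−1)S, M + hS and M + (h+1)S are all affine points with respective x-coordinates x(h−1), x(h), x(h+1), each nonzero, then writing e(j) = −x(j) one has e(h−1)·e(h)²·e(h+1) = a·e(h) − β and (e(h−1) + e(h+1))·e(h)² = γ·e(h) − a. -/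
/-!
The line through a point `P = (x, y)` with `x ≠ 0` and `S = (0, 0)` has slope `y / x`, and the
line through `P` and `-S = (0, -a₃)` has slope `(y + a₃) / x`. Using the curve equation to clear
`y²`, the `X`-coordinates of `P + S` and `P - S` become `(a₄x - a₃y) / x²` and
`(a₄x + a₃y + a₃² + a₁a₃x) / x²`. Their sum no longer involves `y`, and in their product `y`
enters only through `a₃²(y² + a₁xy + a₃y)`, which the curve equation again removes.
Applying this to `P = M + hS` gives both identities.
-/

namespace WeierstrassCurve.Affine

variable {F : Type*} [Field F] {W : Affine F}

lemma equation_iff_of_equation_zero (hO : W.Equation 0 0) (x y : F) :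
    W.Equation x y ↔ y ^ 2 + W.a₁ * x * y + W.a₃ * y = x ^ 3 + W.a₂ * x ^ 2 + W.a₄ * x := by
  have ha₆ : W.a₆ = 0 := by
    rw [equation_iff] at hO
    linear_combination -hO
  rw [equation_iff, ha₆, add_zero]

variable [DecidableEq F]

lemma X_eq_addX_of_some_add_some {x₁ y₁ x₂ y₂ x y : F} {h₁ : W.Nonsingular x₁ y₁}
    {h₂ : W.Nonsingular x₂ y₂} {h : W.Nonsingular x y} (hx : x₁ ≠ x₂)
    (hadd : Point.some _ _ h₁ + Point.some _ _ h₂ = Point.some _ _ h) :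
    x = W.addX x₁ x₂ (W.slope x₁ x₂ y₁ y₂) := by
  rw [Point.add_of_X_ne hx, Point.some.injEq] at hadd
  exact hadd.1.symm

section TranslationByOrigin

variable {x y x₀ y₀ x₂ y₂ : F} (h : W.Nonsingular x y) (hO : W.Nonsingular 0 0)
  {h₀ : W.Nonsingular x₀ y₀} {h₂ : W.Nonsingular x₂ y₂} (hx : x ≠ 0)
include h hO hx

lemma X_mul_sq_of_some_add_origin
    (hadd : Point.some _ _ h + Point.some _ _ hO = Point.some _ _ h₂) :
    x₂ * x ^ 2 = W.a₄ * x - W.a₃ * y := by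
  have hcurve := (equation_iff_of_equation_zero hO.1 x y).mp h.1
  rw [X_eq_addX_of_some_add_some hx hadd, slope_of_X_ne hx, addX]
  field_simp
  linear_combination x ^ 2 * hcurve

lemma X_mul_sq_of_some_sub_origin
    (hsub : Point.some _ _ h - Point.some _ _ hO = Point.some _ _ h₀) :
    x₀ * x ^ 2 = W.a₄ * x + W.a₃ * y + W.a₃ ^ 2 + W.a₁ * W.a₃ * x := by
  rw [sub_eq_add_neg, Point.neg_some] at hsub
  have hcurve := (equation_iff_of_equation_zero hO.1 x y).mp h.1
  rw [X_eq_addX_of_some_add_some hx hsub, slope_of_X_ne hx, addX, negY]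
  field_simp
  linear_combination x ^ 2 * hcurve

variable (hsub : Point.some _ _ h - Point.some _ _ hO = Point.some _ _ h₀)
  (hadd : Point.some _ _ h + Point.some _ _ hO = Point.some _ _ h₂)
include hsub hadd

lemma X_sub_origin_mul_X_add_origin :
    x₀ * x₂ * x ^ 2 = W.a₄ ^ 2 + W.a₁ * W.a₃ * W.a₄ - W.a₂ * W.a₃ ^ 2 - W.a₃ ^ 2 * x := by
  have hx₀ := X_mul_sq_of_some_sub_origin h hO hx hsub
  have hx₂ := X_mul_sq_of_some_add_origin h hO hx hadd
  have hcurve := (equation_iff_of_equation_zero hO.1 x y).mp h.1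
  refine mul_left_cancel₀ (pow_ne_zero 2 hx) ?_
  linear_combination (x₂ * x ^ 2) * hx₀ +
    (W.a₄ * x + W.a₃ * y + W.a₃ ^ 2 + W.a₁ * W.a₃ * x) * hx₂ - W.a₃ ^ 2 * hcurve

lemma X_sub_origin_add_X_add_origin :
    (x₀ + x₂) * x ^ 2 = (2 * W.a₄ + W.a₁ * W.a₃) * x + W.a₃ ^ 2 := by
  linear_combination X_mul_sq_of_some_sub_origin h hO hx hsub +
    X_mul_sq_of_some_add_origin h hO hx hadd

end TranslationByOrigin

end WeierstrassCurve.Affine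

open WeierstrassCurve

open Classical in
theorem elliptic_basic_identities_general {F : Type*} [Field F]
    (E : WeierstrassCurve.Affine F)
    (hS : E.Nonsingular 0 0) :
    ∃ a β γ : F, ∀ (M : E.Point) (h : ℤ)
      (x₀ y₀ x₁ y₁ x₂ y₂ : F)
      (h₀ : E.Nonsingular x₀ y₀) (h₁ : E.Nonsingular x₁ y₁) (h₂ : E.Nonsingular x₂ y₂),
      M + (h - 1) • (WeierstrassCurve.Affine.Point.some _ _ hS) =
          WeierstrassCurve.Affine.Point.some _ _ h₀ →
      M + h • (WeierstrassCurve.Affine.Point.some _ _ hS) =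
          WeierstrassCurve.Affine.Point.some _ _ h₁ →
      M + (h + 1) • (WeierstrassCurve.Affine.Point.some _ _ hS) =
          WeierstrassCurve.Affine.Point.some _ _ h₂ →
      x₀ ≠ 0 → x₁ ≠ 0 → x₂ ≠ 0 →
      (-x₀) * (-x₁) ^ 2 * (-x₂) = a * (-x₁) - β ∧
        ((-x₀) + (-x₂)) * (-x₁) ^ 2 = γ * (-x₁) - a := by
  refine ⟨E.a₃ ^ 2, E.a₂ * E.a₃ ^ 2 - E.a₄ ^ 2 - E.a₁ * E.a₃ * E.a₄, 2 * E.a₄ + E.a₁ * E.a₃, ?_⟩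
  intro M h x₀ y₀ x₁ y₁ x₂ y₂ h₀ h₁ h₂ hprev hcur hnext _ hx₁ _
  set S := Affine.Point.some _ _ hS
  have hsub : Affine.Point.some _ _ h₁ - S = Affine.Point.some _ _ h₀ := by
    rw [← hcur, ← hprev, sub_zsmul, one_zsmul]
    abel
  have hadd : Affine.Point.some _ _ h₁ + S = Affine.Point.some _ _ h₂ := by
    rw [← hcur, ← hnext, add_zsmul, one_zsmul, add_assoc]
  constructor
  · linear_combination Affine.X_sub_origin_mul_X_add_origin h₁ hS hx₁ hsub hadd
  · linear_combination -Affine.X_sub_origin_add_X_add_origin h₁ hS hx₁ hsub hadd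

open Classical in
theorem elliptic_basic_identities {F : Type*} [Field F] (a₁ a₂ a₃ a₄ : F)
    (E : WeierstrassCurve.Affine F)
    (hE : E = { a₁ := a₁, a₂ := a₂, a₃ := a₃, a₄ := a₄, a₆ := 0 })
    (hS : E.Nonsingular 0 0) :
    ∃ a β γ : F, ∀ (M : E.Point) (h : ℤ)
      (x₀ y₀ x₁ y₁ x₂ y₂ : F)
      (h₀ : E.Nonsingular x₀ y₀) (h₁ : E.Nonsingular x₁ y₁) (h₂ : E.Nonsingular x₂ y₂),
      M + (h - 1) • (WeierstrassCurve.Affine.Point.some _ _ hS) =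
          WeierstrassCurve.Affine.Point.some _ _ h₀ →
      M + h • (WeierstrassCurve.Affine.Point.some _ _ hS) =
          WeierstrassCurve.Affine.Point.some _ _ h₁ →
      M + (h + 1) • (WeierstrassCurve.Affine.Point.some _ _ hS) =
          WeierstrassCurve.Affine.Point.some _ _ h₂ →
      x₀ ≠ 0 → x₁ ≠ 0 → x₂ ≠ 0 →
      (-x₀) * (-x₁) ^ 2 * (-x₂) = a * (-x₁) - β ∧
        ((-x₀) + (-x₂)) * (-x₁) ^ 2 = γ * (-x₁) - a :=
  elliptic_basic_identities_general E hS
end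

section
/- Let K be a field, let α, β, γ ∈ K, and let e : ℤ → K satisfy e h ≠ 0 for all h together with, for all h ∈ ℤ, the identities e(h−1)·e(h)²·e(h+1) = α²·e(h) − β and (e(h−1) + e(h+1))·e(h)² = γ·e(h) − α². Then for all h ∈ ℤ: e(h−1)·e(h)²·e(h+1)²·e(h+2) = β·e(h)·e(h+1) + (α⁴ − β·γ). -/
theorem elliptic_odd_identity {K : Type*} [Field K] (α β γ : K) (e : ℤ → K)
    (hne : ∀ h : ℤ, e h ≠ 0)
    (he1 : ∀ h : ℤ, e (h - 1) * (e h) ^ 2 * e (h + 1) = α ^ 2 * e h - β)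
    (he2 : ∀ h : ℤ, (e (h - 1) + e (h + 1)) * (e h) ^ 2 = γ * e h - α ^ 2) :
    ∀ h : ℤ, e (h - 1) * (e h) ^ 2 * (e (h + 1)) ^ 2 * e (h + 2) =
      β * (e h * e (h + 1)) + (α ^ 4 - β * γ) := by
  intro h
  have hb := hne h
  have hc := hne (h + 1)
  have h1 := he1 h
  have h2 := he1 (h + 1)
  have h3 := he2 h
  rw [show h + 1 - 1 = h from by ring, show h + 1 + 1 = h + 2 from by ring] at h2
  have hstar : (e h) ^ 2 * (e (h + 1)) ^ 2 =
      γ * (e h * e (h + 1)) - α ^ 2 * (e h + e (h + 1)) + β := by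
    linear_combination e (h + 1) * h3 - h1
  have key : e h * e (h + 1) * (e (h - 1) * (e h) ^ 2 * (e (h + 1)) ^ 2 * e (h + 2)) =
      e h * e (h + 1) * (β * (e h * e (h + 1)) + (α ^ 4 - β * γ)) := by
    linear_combination (e h * e (h + 1) ^ 2 * e (h + 2)) * h1 +
      (α ^ 2 * e h - β) * h2 - β * hstar
  exact mul_left_cancel₀ (mul_ne_zero hb hc) key
end

section
/- Let K be a field, let α, β ∈ K, and let e : ℤ → K satisfy e h ≠ 0 for all h and e(h−1)·e(h)²·e(h+1) = α²·e(h) − β for all h ∈ ℤ. Then there exists a constant γ ∈ K such that (e(h−1) + e(h+1))·e(h)² = γ·e(h) − α² for all h ∈ ℤ. (Explicitly, γ = e(h)·e(h+1) + α²/e(h) + e(h−1)·e(h) is independent of h.) -/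
/-!
The quantity `e h * e (h + 1) + α ^ 2 / e h + e (h - 1) * e h` is a first integral of the
recursion: comparing it at `h` and `h + 1` and clearing denominators, the difference is the
difference of two instances of the first identity. Multiplying the constant value `γ` by
`e h` gives the second identity.
-/

section

variable {K : Type*} [Field K]

def firstIntegral (α : K) (e : ℤ → K) (h : ℤ) : K :=
  e h * e (h + 1) + α ^ 2 / e h + e (h - 1) * e h

theorem firstIntegral_step {α β x y z w : K} (hy : y ≠ 0) (hz : z ≠ 0)
    (hxyz : x * y ^ 2 * z = α ^ 2 * y - β) (hyzw : y * z ^ 2 * w = α ^ 2 * z - β) :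
    y * z + α ^ 2 / y + x * y = z * w + α ^ 2 / z + y * z := by
  field_simp
  linear_combination hxyz - hyzw

theorem firstIntegral_periodic {α β : K} {e : ℤ → K} (hne : ∀ h, e h ≠ 0)
    (he : ∀ h, e (h - 1) * e h ^ 2 * e (h + 1) = α ^ 2 * e h - β) :
    Function.Periodic (firstIntegral α e) 1 := fun h => by
  have hyzw := he (h + 1)
  rw [add_sub_cancel_right] at hyzw
  simp only [firstIntegral, add_sub_cancel_right]
  exact (firstIntegral_step (hne h) (hne (h + 1)) (he h) hyzw).symm

theorem firstIntegral_eq_firstIntegral_zero {α β : K} {e : ℤ → K} (hne : ∀ h, e h ≠ 0)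
    (he : ∀ h, e (h - 1) * e h ^ 2 * e (h + 1) = α ^ 2 * e h - β) (h : ℤ) :
    firstIntegral α e h = firstIntegral α e 0 := by
  simpa using (firstIntegral_periodic hne he).int_mul_eq h

end

theorem second_identity_from_first {K : Type*} [Field K] (α β : K) (e : ℤ → K)
    (hne : ∀ h : ℤ, e h ≠ 0)
    (he1 : ∀ h : ℤ, e (h - 1) * (e h) ^ 2 * e (h + 1) = α ^ 2 * e h - β) :
    ∃ γ : K, ∀ h : ℤ, (e (h - 1) + e (h + 1)) * (e h) ^ 2 = γ * e h - α ^ 2 := by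
  refine ⟨firstIntegral α e 0, fun h => ?_⟩
  rw [← firstIntegral_eq_firstIntegral_zero hne he1 h, firstIntegral]
  field_simp [hne h]
  ring
end

section
/- Let K be a field, let α, β, γ ∈ K, and let e : ℤ → K satisfy e h ≠ 0 for all h together with, for all h ∈ ℤ, the identities e(h−1)·e(h)²·e(h+1) = α²·e(h) − β and (e(h−1) + e(h+1))·e(h)² = γ·e(h) − α². Let A : ℤ → K satisfy A(h−1)·A(h+1) = e(h)·A(h)² for all h ∈ ℤ. Then A is a Somos 5 sequence: A(h−2)·A(h+3) = β·A(h−1)·A(h+2) + (α⁴ − β·γ)·A(h)·A(h+1) for all h ∈ ℤ. -/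
theorem elliptic_seq_is_somos5 {K : Type*} [Field K] (α β γ : K) (e : ℤ → K)
    (hne : ∀ h : ℤ, e h ≠ 0)
    (he1 : ∀ h : ℤ, e (h - 1) * (e h) ^ 2 * e (h + 1) = α ^ 2 * e h - β)
    (he2 : ∀ h : ℤ, (e (h - 1) + e (h + 1)) * (e h) ^ 2 = γ * e h - α ^ 2)
    (A : ℤ → K) (hA : ∀ h : ℤ, A (h - 1) * A (h + 1) = e h * (A h) ^ 2) :
    ∀ h : ℤ, A (h - 2) * A (h + 3) =
      β * (A (h - 1) * A (h + 2)) + (α ^ 4 - β * γ) * (A h * A (h + 1)) := by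
  -- key identity on e
  have key : ∀ h : ℤ, e (h-1) * e h ^ 2 * e (h+1) ^ 2 * e (h+2) =
      β * (e h * e (h+1)) + (α^4 - β*γ) := by
    intro h
    have p1 := he1 h
    have p2 := he1 (h+1)
    rw [show h+1-1 = h by ring, show h+1+1 = h+2 by ring] at p2
    have q1 := he2 h
    have keymul : (e (h-1) * e h ^ 2 * e (h+1) ^ 2 * e (h+2)) * (e h * e (h+1)) =
        (β * (e h * e (h+1)) + (α^4 - β*γ)) * (e h * e (h+1)) := by
      linear_combination (α^2 * e (h+1)) * p1 + (e (h-1) * e h^2 * e (h+1)) * p2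
        + (-β * e (h+1)) * q1
    exact mul_right_cancel₀ (mul_ne_zero (hne h) (hne (h+1))) keymul
  -- a single zero propagates everywhere
  have step_up : ∀ j : ℤ, A j = 0 → A (j+1) = 0 := by
    intro j hj
    have h1 := hA (j+1)
    rw [show j+1-1 = j by ring] at h1
    have : e (j+1) * A (j+1) ^ 2 = 0 := by rw [← h1, hj, zero_mul]
    have := (mul_eq_zero.mp this).resolve_left (hne (j+1))
    exact pow_eq_zero_iff (n := 2) (by norm_num) |>.mp this
  have step_down : ∀ j : ℤ, A j = 0 → A (j-1) = 0 := by
    intro j hj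
    have h1 := hA (j-1)
    rw [show j-1+1 = j by ring] at h1
    have : e (j-1) * A (j-1) ^ 2 = 0 := by rw [← h1, hj, mul_zero]
    have := (mul_eq_zero.mp this).resolve_left (hne (j-1))
    exact pow_eq_zero_iff (n := 2) (by norm_num) |>.mp this
  have hz : ∀ n : ℤ, A n = 0 → ∀ m : ℤ, A m = 0 := by
    intro n hn m
    rcases le_or_gt n m with hle | hlt
    · -- go up
      have : ∀ k : ℕ, A (n + k) = 0 := by
        intro k
        induction k with
        | zero => simpa using hn
        | succ k ih =>
          have := step_up (n + k) ih
          rwa [show (n + k) + 1 = n + (k+1 : ℕ) by push_cast; ring] at this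
      have := this (m - n).toNat
      rwa [show n + ((m - n).toNat : ℤ) = m by
        rw [Int.toNat_of_nonneg (by omega)]; ring] at this
    · -- go down
      have : ∀ k : ℕ, A (n - k) = 0 := by
        intro k
        induction k with
        | zero => simpa using hn
        | succ k ih =>
          have := step_down (n - k) ih
          rwa [show (n - k) - 1 = n - (k+1 : ℕ) by push_cast; ring] at this
      have := this (n - m).toNat
      rwa [show n - ((n - m).toNat : ℤ) = m by
        rw [Int.toNat_of_nonneg (by omega)]; ring] at this
  intro h
  by_cases hc : ∃ n : ℤ, A n = 0
  · obtain ⟨n, hn⟩ := hc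
    have hz' := hz n hn
    rw [hz' (h-2), hz' (h-1), hz' h, zero_mul, zero_mul, mul_zero, zero_mul,
      mul_zero, add_zero]
  · push_neg at hc
    have r1 := hA (h-1)
    rw [show h-1-1 = h-2 by ring, show h-1+1 = h by ring] at r1
    have r2 := hA h
    have r3 := hA (h+1)
    rw [show h+1-1 = h by ring, show h+1+1 = h+2 by ring] at r3
    have r4 := hA (h+2)
    rw [show h+2-1 = h+1 by ring, show h+2+1 = h+3 by ring] at r4
    have kh := key h
    have GM : (A (h-2) * A (h+3)) * (A h ^ 2 * A (h+1) ^ 2) =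
        (β * (A (h-1) * A (h+2)) + (α^4 - β*γ) * (A h * A (h+1))) *
          (A h ^ 2 * A (h+1) ^ 2) := by
      linear_combination
        (A h ^ 3 * A (h+1) ^ 3) * kh
        + (A h * A (h+1) ^ 2 * A (h+3)) * r1
        + (e (h-1) * A (h-1) ^ 2 * A h * A (h+1)) * r4
        + (e (h-1) * e (h+2) * A (h-1) * A h * A (h+2) ^ 2) * r2
        + (e (h-1) * e h * e (h+2) * A (h-1) * A h ^ 2 * A (h+2)) * r3
        + (e (h-1) * e h * e (h+1) * e (h+2) * A h ^ 2 * A (h+1) * A (h+2)) * r2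
        + (e (h-1) * e h ^ 2 * e (h+1) * e (h+2) * A h ^ 3 * A (h+1)) * r3
        + (-β * A h ^ 2 * A (h+1) * A (h+2)) * r2
        + (-β * e h * A h ^ 3 * A (h+1)) * r3
    exact mul_right_cancel₀
      (mul_ne_zero (pow_ne_zero 2 (hc h)) (pow_ne_zero 2 (hc (h+1)))) GM
end

section
/- Let K be a field, let α, β, γ ∈ K, and let e : ℤ → K and f : ℤ → K be two sequences of nonzero elements, each satisfying (with the same constants α, β, γ) the identities e(h−1)·e(h)²·e(h+1) = α²·e(h) − β and (e(h−1) + e(h+1))·e(h)² = γ·e(h) − α² for all h ∈ ℤ, and likewise for f. Then for all h, m ∈ ℤ: (e(h−1) − f(m))·e(h)²·(e(h+1) − f(m)) = (f(m−1) − e(h))·f(m)²·(f(m+1) − e(h)). Indeed both sides equal α²·e(h) − β − γ·f(m)·e(h) + α²·f(m) + f(m)²·e(h)², an expression symmetric under interchanging e(h) and f(m). -/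
theorem symmetry_even {K : Type*} [Field K] (α β γ : K) (e f : ℤ → K)
    (hne : ∀ h : ℤ, e h ≠ 0) (hnf : ∀ h : ℤ, f h ≠ 0)
    (he1 : ∀ h : ℤ, e (h - 1) * (e h) ^ 2 * e (h + 1) = α ^ 2 * e h - β)
    (he2 : ∀ h : ℤ, (e (h - 1) + e (h + 1)) * (e h) ^ 2 = γ * e h - α ^ 2)
    (hf1 : ∀ h : ℤ, f (h - 1) * (f h) ^ 2 * f (h + 1) = α ^ 2 * f h - β)
    (hf2 : ∀ h : ℤ, (f (h - 1) + f (h + 1)) * (f h) ^ 2 = γ * f h - α ^ 2) :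
    ∀ h m : ℤ,
      (e (h - 1) - f m) * (e h) ^ 2 * (e (h + 1) - f m) =
        (f (m - 1) - e h) * (f m) ^ 2 * (f (m + 1) - e h) ∧
      (e (h - 1) - f m) * (e h) ^ 2 * (e (h + 1) - f m) =
        α ^ 2 * e h - β - γ * f m * e h + α ^ 2 * f m + (f m) ^ 2 * (e h) ^ 2 := by
  intro h m
  constructor
  · linear_combination he1 h - f m * he2 h - hf1 m + e h * hf2 m
  · linear_combination he1 h - f m * he2 h
end

section
/- Let K be a field, let α, β, γ ∈ K, and let e : ℤ → K and f : ℤ → K be two sequences of nonzero elements, each satisfying (with the same constants α, β, γ) the identities e(h−1)·e(h)²·e(h+1) = α²·e(h) − β and (e(h−1) + e(h+1))·e(h)² = γ·e(h) − α² for all h ∈ ℤ, and likewise for f. Then for all h, m ∈ ℤ: (e(h−1)·e(h) − f(m)·f(m+1))·e(h)·e(h+1)·(e(h+1)·e(h+2) − f(m)·f(m+1)) = (f(m−1)·f(m) − e(h)·e(h+1))·f(m)·f(m+1)·(f(m+1)·f(m+2) − e(h)·e(h+1)). Indeed both sides equal β·e(h)·e(h+1) + (α⁴ − β·γ) − (e(h)·e(h+1)·(γ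 − e(h)·e(h+1)) − β)·f(m)·f(m+1) + e(h)·e(h+1)·f(m)²·f(m+1)², an expression symmetric under interchanging e(h)·e(h+1) and f(m)·f(m+1). -/
lemma symmetry_odd_key {K : Type*} [Field K] (α β γ : K) (e : ℤ → K)
    (hne : ∀ h : ℤ, e h ≠ 0)
    (he1 : ∀ h : ℤ, e (h - 1) * (e h) ^ 2 * e (h + 1) = α ^ 2 * e h - β)
    (he2 : ∀ h : ℤ, (e (h - 1) + e (h + 1)) * (e h) ^ 2 = γ * e h - α ^ 2) :
    ∀ (h : ℤ) (p : K),
      (e (h - 1) * e h - p) * (e h * e (h + 1)) * (e (h + 1) * e (h + 2) - p) =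
        β * (e h * e (h + 1)) + (α ^ 4 - β * γ) -
          (e h * e (h + 1) * (γ - e h * e (h + 1)) - β) * p +
          e h * e (h + 1) * p ^ 2 := by
  intro h p
  have hx : e h * e (h + 1) ≠ 0 := mul_ne_zero (hne h) (hne (h + 1))
  apply mul_right_cancel₀ hx
  have H1 := he1 h
  have H1' := he1 (h + 1)
  have H2 := he2 h
  have i1 : h + 1 - 1 = h := by ring
  have i2 : h + 1 + 1 = h + 2 := by ring
  rw [i1, i2] at H1'
  set a := e (h - 1)
  set b := e h
  set c := e (h + 1)
  set d := e (h + 2)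
  linear_combination (α ^ 2 * c) * H1 +
    ((a * b - p) * (b * c)) * H1' + (-(β + p * (b * c)) * c) * H2

theorem symmetry_odd {K : Type*} [Field K] (α β γ : K) (e f : ℤ → K)
    (hne : ∀ h : ℤ, e h ≠ 0) (hnf : ∀ h : ℤ, f h ≠ 0)
    (he1 : ∀ h : ℤ, e (h - 1) * (e h) ^ 2 * e (h + 1) = α ^ 2 * e h - β)
    (he2 : ∀ h : ℤ, (e (h - 1) + e (h + 1)) * (e h) ^ 2 = γ * e h - α ^ 2)
    (hf1 : ∀ h : ℤ, f (h - 1) * (f h) ^ 2 * f (h + 1) = α ^ 2 * f h - β)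
    (hf2 : ∀ h : ℤ, (f (h - 1) + f (h + 1)) * (f h) ^ 2 = γ * f h - α ^ 2) :
    ∀ h m : ℤ,
      (e (h - 1) * e h - f m * f (m + 1)) * (e h * e (h + 1)) *
          (e (h + 1) * e (h + 2) - f m * f (m + 1)) =
        (f (m - 1) * f m - e h * e (h + 1)) * (f m * f (m + 1)) *
          (f (m + 1) * f (m + 2) - e h * e (h + 1)) ∧
      (e (h - 1) * e h - f m * f (m + 1)) * (e h * e (h + 1)) *
          (e (h + 1) * e (h + 2) - f m * f (m + 1)) =
        β * (e h * e (h + 1)) + (α ^ 4 - β * γ) -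
          (e h * e (h + 1) * (γ - e h * e (h + 1)) - β) * (f m * f (m + 1)) +
          e h * e (h + 1) * (f m) ^ 2 * (f (m + 1)) ^ 2 := by
  intro h m
  have ke := symmetry_odd_key α β γ e hne he1 he2 h (f m * f (m + 1))
  have kf := symmetry_odd_key α β γ f hnf hf1 hf2 m (e h * e (h + 1))
  constructor
  · rw [ke, kf]; ring
  · rw [ke]; ring
end

section
/- Let R be a commutative ring and let A, W : ℤ → R be sequences such that for all h, m ∈ ℤ: A(h−m)·A(h+m) = W(m)²·A(h−1)·A(h+1) − W(m−1)·W(m+1)·A(h)², and also W(h−m)·W(h+m) = W(m)²·W(h−1)·W(h+1) − W(m−1)·W(m+1)·W(h)². Then for all h, m, n ∈ ℤ: A(h−m)·A(h+m)·W(n)² = A(h−n)·A(h+n)·W(m)² − W(m−n)·W(m+n)·A(h)². -/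
theorem three_index_relation_even {R : Type*} [CommRing R] (A W : ℤ → R)
    (hA : ∀ h m : ℤ, A (h - m) * A (h + m) =
      (W m) ^ 2 * (A (h - 1) * A (h + 1)) - W (m - 1) * W (m + 1) * (A h) ^ 2)
    (hW : ∀ h m : ℤ, W (h - m) * W (h + m) =
      (W m) ^ 2 * (W (h - 1) * W (h + 1)) - W (m - 1) * W (m + 1) * (W h) ^ 2) :
    ∀ h m n : ℤ,
      A (h - m) * A (h + m) * (W n) ^ 2 =
        A (h - n) * A (h + n) * (W m) ^ 2 - W (m - n) * W (m + n) * (A h) ^ 2 := by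
  intro h m n
  rw [hA h m, hA h n, hW m n]
  ring
end

section
/- Let K be a field and let A, W : ℤ → K be sequences with W(1) = 1 and W(2) ≠ 0, such that for all h, m ∈ ℤ: W(1)·W(2)·A(h−m)·A(h+m+1) = W(m)·W(m+1)·A(h−1)·A(h+2) − W(m−1)·W(m+2)·A(h)·A(h+1), and also W(1)·W(2)·W(h−m)·W(h+m+1) = W(m)·W(m+1)·W(h−1)·W(h+2) − W(m−1)·W(m+2)·W(h)·W(h+1). Then for all h, m, n ∈ ℤ: A(h−m)·A(h+m+1)·W(n)·W(n+1) = W(m)·W(m+1)·A(h−n)·A(h+n+1) − W(m−n)·W(m+n+1)·A(h)·A(h+1). -/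
theorem three_index_relation_odd {K : Type*} [Field K] (A W : ℤ → K)
    (hW1 : W 1 = 1) (hW2 : W 2 ≠ 0)
    (hA : ∀ h m : ℤ, W 1 * W 2 * (A (h - m) * A (h + m + 1)) =
      W m * W (m + 1) * (A (h - 1) * A (h + 2)) - W (m - 1) * W (m + 2) * (A h * A (h + 1)))
    (hW : ∀ h m : ℤ, W 1 * W 2 * (W (h - m) * W (h + m + 1)) =
      W m * W (m + 1) * (W (h - 1) * W (h + 2)) - W (m - 1) * W (m + 2) * (W h * W (h + 1))) :
    ∀ h m n : ℤ,
      A (h - m) * A (h + m + 1) * (W n * W (n + 1)) =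
        W m * W (m + 1) * (A (h - n) * A (h + n + 1)) -
          W (m - n) * W (m + n + 1) * (A h * A (h + 1)) := by
  intro h m n
  have h12 : W 1 * W 2 ≠ 0 := by rw [hW1]; simpa using hW2
  apply mul_left_cancel₀ h12
  linear_combination (W n * W (n + 1)) * hA h m - W m * W (m + 1) * hA h n +
    (A h * A (h + 1)) * hW m n
end

section
/- Let R be a commutative ring and let W : ℤ → R be a sequence with W(−h) = −W(h) for all h ∈ ℤ and W(1) = 1. Then the following are equivalent: (i) for all h, m, n ∈ ℤ: W(h−m)·W(h+m)·W(n)² + W(n−h)·W(n+h)·W(m)² + W(m−n)·W(m+n)·W(h)² = 0; (ii) for all h, m ∈ ℤ: W(h−m)·W(h+m) = W(m)²·W(h−1)·W(h+1) − W(m−1)·W(m+1)·W(h)². -/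
theorem ward_relations_equivalent {R : Type*} [CommRing R] (W : ℤ → R)
    (hWneg : ∀ h : ℤ, W (-h) = -W h) (hW1 : W 1 = 1) :
    (∀ h m n : ℤ,
        W (h - m) * W (h + m) * (W n) ^ 2 + W (n - h) * W (n + h) * (W m) ^ 2 +
          W (m - n) * W (m + n) * (W h) ^ 2 = 0) ↔
      (∀ h m : ℤ, W (h - m) * W (h + m) =
        (W m) ^ 2 * (W (h - 1) * W (h + 1)) - W (m - 1) * W (m + 1) * (W h) ^ 2) := by
  constructor
  · intro H h m
    have h1 := H h m 1
    have h2 : W (1 - h) = -W (h - 1) := by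
      rw [show (1 - h : ℤ) = -(h - 1) by ring, hWneg]
    rw [h2, hW1, show (1 + h : ℤ) = h + 1 by ring] at h1
    linear_combination h1
  · intro H h m n
    linear_combination (W n) ^ 2 * H h m + (W m) ^ 2 * H n h + (W h) ^ 2 * H m n
end

section
/- Let K be a field, let α, β, γ ∈ K, and let e : ℤ → K satisfy e h ≠ 0 for all h together with, for all h ∈ ℤ, the identities e(h−1)·e(h)²·e(h+1) = α²·e(h) − β and (e(h−1) + e(h+1))·e(h)² = γ·e(h) − α². Let c : ℤ → K and B : ℤ → K be sequences with c(h)·B(h−1)·B(h+1) = e(h)·B(h)² for all h ∈ ℤ. Then for all h ∈ ℤ: c(h−1)·c(h)²·c(h+1)²·c(h+2)·B(h−2)·B(h+3) = c(h)·c(h+1)·β·B(h−1)·B(h+2) + (α⁴ − β·γ)·B(h)·B(h+1). In particular, this relation has constant coefficients (independent of h) exactly when c(h)·c(h+1) is constant in h, in which case B is a Somos 5 sequence. -/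
theorem somos5_from_twisted_elliptic {K : Type*} [Field K] (α β γ : K) (e : ℤ → K)
    (hne : ∀ h : ℤ, e h ≠ 0)
    (he1 : ∀ h : ℤ, e (h - 1) * (e h) ^ 2 * e (h + 1) = α ^ 2 * e h - β)
    (he2 : ∀ h : ℤ, (e (h - 1) + e (h + 1)) * (e h) ^ 2 = γ * e h - α ^ 2)
    (c B : ℤ → K)
    (hB : ∀ h : ℤ, c h * (B (h - 1) * B (h + 1)) = e h * (B h) ^ 2) :
    (∀ h : ℤ,
      c (h - 1) * (c h) ^ 2 * (c (h + 1)) ^ 2 * c (h + 2) * (B (h - 2) * B (h + 3)) =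
        c h * c (h + 1) * β * (B (h - 1) * B (h + 2)) +
          (α ^ 4 - β * γ) * (B h * B (h + 1))) ∧
    ∀ v : K, (∀ h : ℤ, c h * c (h + 1) = v) →
      ∀ h : ℤ, v ^ 3 * (B (h - 2) * B (h + 3)) =
        v * β * (B (h - 1) * B (h + 2)) + (α ^ 4 - β * γ) * (B h * B (h + 1)) := by
  -- key identity for e
  have key : ∀ h : ℤ, e (h-1) * (e h)^2 * (e (h+1))^2 * e (h+2) =
      β * (e h * e (h+1)) + (α^4 - β*γ) := by
    intro h
    have h1 := he1 h
    have h2 := he1 (h+1)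
    have h3 := he2 h
    rw [show h + 1 - 1 = h from by ring, show h + 1 + 1 = h + 2 from by ring] at h2
    have prod : e (h-1) * (e h)^3 * (e (h+1))^3 * e (h+2)
        = (α^2 * e h - β) * (α^2 * e (h+1) - β) := by
      rw [← h1, ← h2]; ring
    have sq : (e h)^2 * (e (h+1))^2
        = γ * (e h * e (h+1)) - α^2 * e (h+1) - α^2 * e h + β := by
      linear_combination e (h+1) * h3 - h1
    have hne' : e h * e (h+1) ≠ 0 := mul_ne_zero (hne h) (hne (h+1))
    apply mul_left_cancel₀ hne'
    linear_combination prod - β * sq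
  have main : ∀ h : ℤ,
      c (h - 1) * (c h) ^ 2 * (c (h + 1)) ^ 2 * c (h + 2) * (B (h - 2) * B (h + 3)) =
        c h * c (h + 1) * β * (B (h - 1) * B (h + 2)) +
          (α ^ 4 - β * γ) * (B h * B (h + 1)) := by
    by_cases hz : ∃ h0 : ℤ, B h0 = 0
    · -- then B is identically zero
      obtain ⟨h0, hB0⟩ := hz
      have step_up : ∀ k : ℤ, B k = 0 → B (k+1) = 0 := by
        intro k hk
        have h' := hB (k+1)
        rw [show k + 1 - 1 = k from by ring] at h'
        have h0' : e (k+1) * (B (k+1))^2 = 0 := by rw [← h', hk]; ring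
        rcases mul_eq_zero.mp h0' with h | h
        · exact absurd h (hne (k+1))
        · exact pow_eq_zero_iff (by norm_num) |>.mp h
      have step_down : ∀ k : ℤ, B k = 0 → B (k-1) = 0 := by
        intro k hk
        have h' := hB (k-1)
        rw [show k - 1 + 1 = k from by ring] at h'
        have h0' : e (k-1) * (B (k-1))^2 = 0 := by rw [← h', hk]; ring
        rcases mul_eq_zero.mp h0' with h | h
        · exact absurd h (hne (k-1))
        · exact pow_eq_zero_iff (by norm_num) |>.mp h
      have hall : ∀ h : ℤ, B h = 0 := by
        have up : ∀ n : ℕ, B (h0 + n) = 0 := by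
          intro n
          induction n with
          | zero => simpa using hB0
          | succ m ih =>
            have := step_up (h0 + m) ih
            rwa [show (h0 + (m:ℤ)) + 1 = h0 + ((m:ℕ)+1 : ℕ) from by push_cast; ring] at this
        have down : ∀ n : ℕ, B (h0 - n) = 0 := by
          intro n
          induction n with
          | zero => simpa using hB0
          | succ m ih =>
            have := step_down (h0 - m) ih
            rwa [show (h0 - (m:ℤ)) - 1 = h0 - ((m:ℕ)+1 : ℕ) from by push_cast; ring] at this
        intro h
        rcases le_or_gt h0 h with hle | hlt
        · obtain ⟨n, hn⟩ := Int.le.dest hle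
          rw [← hn]; exact up n
        · obtain ⟨n, hn⟩ := Int.le.dest hlt.le
          have : h = h0 - n := by omega
          rw [this]; exact down n
      intro h
      rw [hall (h-2), hall (h-1), hall h]
      ring
    · push_neg at hz
      intro h
      have p1 := hB (h-1)
      rw [show h - 1 - 1 = h - 2 from by ring, show h - 1 + 1 = h from by ring] at p1
      have p2 := hB h
      have p3 := hB (h+1)
      rw [show h + 1 - 1 = h from by ring, show h + 1 + 1 = h + 2 from by ring] at p3
      have p4 := hB (h+2)
      rw [show h + 2 - 1 = h + 1 from by ring, show h + 2 + 1 = h + 3 from by ring] at p4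
      have hM : (B (h-1))^2 * (B h)^3 * (B (h+1))^3 * (B (h+2))^2 ≠ 0 := by
        apply mul_ne_zero; apply mul_ne_zero; apply mul_ne_zero
        all_goals exact pow_ne_zero _ (hz _)
      have P : c (h-1) * (c h)^2 * (c (h+1))^2 * c (h+2) * (B (h-2) * B (h+3)) *
          ((B (h-1))^2 * (B h)^3 * (B (h+1))^3 * (B (h+2))^2) =
          (e (h-1) * (e h)^2 * (e (h+1))^2 * e (h+2)) *
          ((B (h-1))^2 * (B h)^4 * (B (h+1))^4 * (B (h+2))^2) := by
        calc _ = (c (h-1) * (B (h-2) * B h)) * (c h * (B (h-1) * B (h+1)))^2 *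
              (c (h+1) * (B h * B (h+2)))^2 * (c (h+2) * (B (h+1) * B (h+3))) := by ring
          _ = (e (h-1) * (B (h-1))^2) * (e h * (B h)^2)^2 *
              (e (h+1) * (B (h+1))^2)^2 * (e (h+2) * (B (h+2))^2) := by rw [p1, p2, p3, p4]
          _ = _ := by ring
      have Q : c h * c (h+1) * (B (h-1) * B (h+2)) *
          ((B (h-1))^2 * (B h)^3 * (B (h+1))^3 * (B (h+2))^2) =
          (e h * e (h+1)) *
          ((B (h-1))^2 * (B h)^4 * (B (h+1))^4 * (B (h+2))^2) := by
        calc _ = (c h * (B (h-1) * B (h+1))) * (c (h+1) * (B h * B (h+2))) *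
              ((B (h-1))^2 * (B h)^2 * (B (h+1))^2 * (B (h+2))^2) := by ring
          _ = (e h * (B h)^2) * (e (h+1) * (B (h+1))^2) *
              ((B (h-1))^2 * (B h)^2 * (B (h+1))^2 * (B (h+2))^2) := by rw [p2, p3]
          _ = _ := by ring
      apply mul_right_cancel₀ hM
      linear_combination P - β * Q
        + ((B (h-1))^2 * (B h)^4 * (B (h+1))^4 * (B (h+2))^2) * key h
  refine ⟨main, ?_⟩
  intro v hv h
  have h1 := hv (h-1)
  rw [show h - 1 + 1 = h from by ring] at h1
  have h2 := hv h
  have h3 := hv (h+1)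
  rw [show h + 1 + 1 = h + 2 from by ring] at h3
  calc v ^ 3 * (B (h - 2) * B (h + 3))
      = c (h - 1) * (c h) ^ 2 * (c (h + 1)) ^ 2 * c (h + 2) * (B (h - 2) * B (h + 3)) := by
        have hv3 : v * v * v = (c (h-1) * c h) * (c h * c (h+1)) * (c (h+1) * c (h+2)) := by
          rw [h1, h2, h3]
        linear_combination (B (h - 2) * B (h + 3)) * hv3
    _ = c h * c (h + 1) * β * (B (h - 1) * B (h + 2)) +
          (α ^ 4 - β * γ) * (B h * B (h + 1)) := main h
    _ = v * β * (B (h - 1) * B (h + 2)) + (α ^ 4 - β * γ) * (B h * B (h + 1)) := by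
        linear_combination β * (B (h - 1) * B (h + 2)) * h2
end
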